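/- arXiv:2206.13481 — 14 statements merged into one kernel-verified Lean document; each statement's English description precedes it below -/
import Mathlib

section
/- For every real α ≥ 1 and every real c > 1, there exists a unique real γ in the open interval (1, 1 + (c−1)/α) such that D(1/α ‖ (γ−1)/(c−1)) = ln(c)/α. -/
/-!
For `0 < a ≤ 1` the map `b ↦ D(a‖b)` has derivative `(b - a) / (b (1 - b))` on `(0, 1)`, so it is
strictly decreasing on `(0, a]`; it vanishes at `b = a` and tends to `+∞` as `b → 0⁺`. Hence it
takes every positive value exactly once on `(0, a)`. With `a = 1/α` and the value `ln c / α`,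
the affine change of variables `b = (γ - 1) / (c - 1)` gives the unique `γ`.
-/

/-- Kullback–Leibler divergence `D(a‖b) = a·ln(a/b) + (1−a)·ln((1−a)/(1−b))`.
(The convention `0·ln 0 = 0` holds automatically since `Real.log 0 = 0`.) -/
noncomputable def klDiv (a b : ℝ) : ℝ :=
  a * Real.log (a / b) + (1 - a) * Real.log ((1 - a) / (1 - b))

open Real Set Filter Topology

lemma mul_log_div {x y : ℝ} (hy : y ≠ 0) : x * log (x / y) = x * log x - x * log y := by
  rcases eq_or_ne x 0 with rfl | hx
  · simp
  · rw [log_div hx hy, mul_sub]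

section

variable {a b : ℝ}

lemma klDiv_self (a : ℝ) : klDiv a a = 0 := by
  have h (x : ℝ) : x * log (x / x) = 0 := by rcases eq_or_ne x 0 with rfl | hx <;> simp [*]
  simp only [klDiv, h, add_zero]

lemma klDiv_eq_neg_binEntropy (a : ℝ) (hb₀ : b ≠ 0) (hb₁ : b ≠ 1) :
    klDiv a b = -(a * log b) - (1 - a) * log (1 - b) - binEntropy a := by
  rw [klDiv, mul_log_div hb₀, mul_log_div (sub_ne_zero.2 hb₁.symm), binEntropy, log_inv, log_inv]
  ring

lemma hasDerivAt_klDiv (a : ℝ) (hb : b ∈ Ioo 0 1) :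
    HasDerivAt (klDiv a) ((b - a) / (b * (1 - b))) b := by
  have hb₀ : b ≠ 0 := hb.1.ne'
  have hb₁ : 1 - b ≠ 0 := by linarith [hb.2]
  have hdiff : HasDerivAt (fun x => -(a * log x) - (1 - a) * log (1 - x) - binEntropy a)
      ((b - a) / (b * (1 - b))) b := by
    refine ((((hasDerivAt_log hb₀).const_mul a).neg.sub
      ((((hasDerivAt_id b).const_sub 1).log hb₁).const_mul (1 - a))).sub_const
      (binEntropy a)).congr_deriv ?_
    rw [id]
    field_simp
    ring
  refine hdiff.congr_of_eventuallyEq ?_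
  filter_upwards [Ioo_mem_nhds hb.1 hb.2] with x hx
  exact klDiv_eq_neg_binEntropy a hx.1.ne' hx.2.ne

lemma continuousOn_klDiv_Ioc (ha : a ≤ 1) : ContinuousOn (klDiv a) (Ioc 0 a) := by
  rcases ha.lt_or_eq with ha | rfl
  · exact fun b hb => (hasDerivAt_klDiv a ⟨hb.1, hb.2.trans_lt ha⟩).continuousAt.continuousWithinAt
  · have : klDiv 1 = fun b => -log b := by
      funext b
      simp [klDiv]
    rw [this]
    exact continuousOn_log.neg.mono fun b hb => hb.1.ne'

lemma strictAntiOn_klDiv_Ioc (ha : a ≤ 1) : StrictAntiOn (klDiv a) (Ioc 0 a) := by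
  refine strictAntiOn_of_deriv_neg (convex_Ioc 0 a) (continuousOn_klDiv_Ioc ha) fun b hb => ?_
  rw [interior_Ioc] at hb
  rw [(hasDerivAt_klDiv a ⟨hb.1, hb.2.trans_le ha⟩).deriv]
  exact div_neg_of_neg_of_pos (by linarith [hb.2]) (mul_pos hb.1 (by linarith [hb.2.trans_le ha]))

lemma tendsto_klDiv_nhdsGT_zero (ha : 0 < a) : Tendsto (klDiv a) (𝓝[>] 0) atTop := by
  have hlog : Tendsto (fun b => -(a * log b)) (𝓝[>] 0) atTop :=
    tendsto_neg_atBot_atTop.comp (tendsto_log_nhdsGT_zero.const_mul_atBot ha)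
  have hrest : Tendsto (fun b => -((1 - a) * log (1 - b)) - binEntropy a) (𝓝[>] 0)
      (𝓝 (-((1 - a) * log (1 - 0)) - binEntropy a)) :=
    ((((continuous_const.sub continuous_id).continuousAt.log (by norm_num)).const_mul
      (1 - a)).neg.sub_const (binEntropy a)).mono_left nhdsWithin_le_nhds
  refine (hlog.atTop_add hrest).congr' ?_
  filter_upwards [Ioo_mem_nhdsGT one_pos] with b hb
  rw [klDiv_eq_neg_binEntropy a hb.1.ne' hb.2.ne]
  ring

theorem existsUnique_klDiv_eq (ha₀ : 0 < a) (ha₁ : a ≤ 1) {t : ℝ} (ht : 0 < t) :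
    ∃! b, b ∈ Ioo 0 a ∧ klDiv a b = t := by
  obtain ⟨ε, hεt, hε⟩ : ∃ ε, t ≤ klDiv a ε ∧ ε ∈ Ioo 0 a :=
    (((tendsto_klDiv_nhdsGT_zero ha₀).eventually_ge_atTop t).and (Ioo_mem_nhdsGT ha₀)).exists
  have hsub : Icc ε a ⊆ Ioc 0 a := fun x hx => ⟨hε.1.trans_le hx.1, hx.2⟩
  obtain ⟨b, hb, hbt⟩ := intermediate_value_Icc' hε.2.le ((continuousOn_klDiv_Ioc ha₁).mono hsub)
    ⟨(klDiv_self a).trans_le ht.le, hεt⟩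
  have hba : b ≠ a := by
    rintro rfl
    exact ht.ne' (hbt.symm.trans (klDiv_self b))
  refine ⟨b, ⟨⟨hε.1.trans_le hb.1, hb.2.lt_of_ne hba⟩, hbt⟩, fun b' hb' => ?_⟩
  exact (strictAntiOn_klDiv_Ioc ha₁).injOn (Ioo_subset_Ioc_self hb'.1) (hsub hb)
    (hb'.2.trans hbt.symm)

end

/-- For every real `α ≥ 1` and every real `c > 1`, there exists a unique real `γ`
in the open interval `(1, 1 + (c−1)/α)` such that `D(1/α ‖ (γ−1)/(c−1)) = ln(c)/α`. -/
theorem stmt0 (α c : ℝ) (hα : 1 ≤ α) (hc : 1 < c) :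
    ∃! γ : ℝ, γ ∈ Set.Ioo 1 (1 + (c - 1) / α) ∧
      klDiv (1 / α) ((γ - 1) / (c - 1)) = Real.log c / α := by
  have hα₀ : 0 < α := by linarith
  have hc₁ : 0 < c - 1 := sub_pos.2 hc
  refine (Equiv.existsUnique_congr ((Equiv.subRight 1).trans (Equiv.divRight₀ (c - 1) hc₁.ne'))
    fun γ => and_congr_left' ?_).2
    (existsUnique_klDiv_eq (by positivity) ((div_le_one hα₀).2 hα) (div_pos (log_pos hc) hα₀))
  show γ ∈ Ioo 1 _ ↔ (γ - 1) / (c - 1) ∈ Ioo 0 (1 / α)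
  rw [mem_Ioo, mem_Ioo, div_pos_iff_of_pos_right hc₁, div_lt_iff₀ hc₁, sub_pos, one_div_mul_eq_div,
    sub_lt_iff_lt_add']
end

section
/- For all reals α > 1 and c > 1, if γ is a real number with 1 < γ < 1 + (c−1)/α and D(1/α ‖ (γ−1)/(c−1)) = ln(c)/α, then γ < 2 − 1/c < 2. -/
/-- Split `a·ln(a/b) = a·ln a + a·ln(1/b)`: the first summand is negative, and the
second term of the divergence is nonpositive once `b ≤ a`. -/
theorem klDiv_lt_mul_log_inv {a b : ℝ} (ha₀ : 0 < a) (ha₁ : a < 1) (hb : 0 < b) (hba : b ≤ a) :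
    klDiv a b < a * Real.log b⁻¹ := by
  have hfirst : a * Real.log (a / b) < a * Real.log b⁻¹ := by
    have hneg : a * Real.log a < 0 := mul_neg_of_pos_of_neg ha₀ (Real.log_neg ha₀ ha₁)
    rw [div_eq_mul_inv, Real.log_mul ha₀.ne' (inv_ne_zero hb.ne'), mul_add]
    linarith
  have hratio : (1 - a) / (1 - b) ≤ 1 := (div_le_one (by linarith)).mpr (by linarith)
  have hsecond : (1 - a) * Real.log ((1 - a) / (1 - b)) ≤ 0 :=
    mul_nonpos_of_nonneg_of_nonpos (by linarith)
      (Real.log_nonpos (div_nonneg (by linarith) (by linarith)) hratio)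
  unfold klDiv
  linarith

theorem stmt2_general (α c γ : ℝ) (hα : 1 < α) (hc : 1 < c)
    (h2 : γ < 1 + (c - 1) / α)
    (h3 : klDiv (1 / α) ((γ - 1) / (c - 1)) = Real.log c / α) :
    γ < 2 - 1 / c ∧ 2 - 1 / c < 2 := by
  have hc₀ : 0 < c := by linarith
  have hc₁ : 0 < c - 1 := by linarith
  refine ⟨?_, by linarith [one_div_pos.mpr hc₀]⟩
  by_contra! hγ
  set b := (γ - 1) / (c - 1)
  have hcb : c⁻¹ ≤ b := by
    rw [le_div_iff₀ hc₁, inv_mul_eq_div, sub_div, div_self hc₀.ne']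
    linarith
  have hb : 0 < b := lt_of_lt_of_le (inv_pos.mpr hc₀) hcb
  have hba : b ≤ 1 / α := by
    rw [div_le_iff₀ hc₁, one_div_mul_eq_div]
    linarith
  have hlog : Real.log b⁻¹ ≤ Real.log c :=
    Real.log_le_log (inv_pos.mpr hb) ((inv_le_comm₀ hb hc₀).mpr hcb)
  have hlt : klDiv (1 / α) b < Real.log c / α := calc
    klDiv (1 / α) b < 1 / α * Real.log b⁻¹ :=
      klDiv_lt_mul_log_inv (by positivity) ((div_lt_one (by linarith)).mpr hα) hb hba
    _ ≤ 1 / α * Real.log c := by gcongr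
    _ = Real.log c / α := one_div_mul_eq_div α _
  exact hlt.ne h3

/-- For all reals `α > 1` and `c > 1`, if `γ` satisfies `1 < γ < 1 + (c−1)/α` and
`D(1/α ‖ (γ−1)/(c−1)) = ln(c)/α`, then `γ < 2 − 1/c < 2`. -/
theorem stmt2 (α c γ : ℝ) (hα : 1 < α) (hc : 1 < c)
    (h1 : 1 < γ) (h2 : γ < 1 + (c - 1) / α)
    (h3 : klDiv (1 / α) ((γ - 1) / (c - 1)) = Real.log c / α) :
    γ < 2 - 1 / c ∧ 2 - 1 / c < 2 :=
  stmt2_general α c γ hα hc h2 h3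
end

section
/- For all reals α > 1 and c > 1, if γ is a real number with 1 < γ < 1 + (c−1)/α and D(1/α ‖ (γ−1)/(c−1)) = ln(c)/α, then γ < αc/(1 + (α−1)c). -/
/-!
Writing `S = 1 + (α - 1)c`, the bound `γ = αc/S` corresponds to the argument `b₀ = 1/S` of the
divergence, and a direct computation gives `D(1/α ‖ b₀) = ln(c)/α + ln(S/(αc)) < ln(c)/α`.
Since `b ↦ D(a ‖ b)` is strictly decreasing on `(0, a]`, the equation
`D(1/α ‖ (γ - 1)/(c - 1)) = ln(c)/α` forces `(γ - 1)/(c - 1) < b₀`, i.e. `γ < αc/S`.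
-/

open Real Set

lemma klDiv_eq_sub {a b : ℝ} (ha₀ : 0 < a) (ha₁ : a < 1) (hb₀ : 0 < b) (hb₁ : b < 1) :
    klDiv a b = (a * log a + (1 - a) * log (1 - a)) - (a * log b + (1 - a) * log (1 - b)) := by
  unfold klDiv
  rw [log_div ha₀.ne' hb₀.ne', log_div (by linarith) (by linarith)]
  ring

lemma hasDerivAt_mul_log_add_mul_log_one_sub (a : ℝ) {x : ℝ} (hx₀ : 0 < x) (hx₁ : x < 1) :
    HasDerivAt (fun y => a * log y + (1 - a) * log (1 - y)) (a / x - (1 - a) / (1 - x)) x := by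
  have hlog_one_sub : HasDerivAt (fun y => log (1 - y)) ((1 - x)⁻¹ * -1) x :=
    (hasDerivAt_log (by linarith)).comp x ((hasDerivAt_id x).const_sub 1)
  exact (((hasDerivAt_log hx₀.ne').const_mul a).add (hlog_one_sub.const_mul (1 - a))).congr_deriv
    (by ring)

lemma strictMonoOn_mul_log_add_mul_log_one_sub {a : ℝ} (ha : a < 1) :
    StrictMonoOn (fun y => a * log y + (1 - a) * log (1 - y)) (Ioc 0 a) := by
  have hderiv : ∀ x ∈ Ioc 0 a,
      HasDerivAt (fun y => a * log y + (1 - a) * log (1 - y)) (a / x - (1 - a) / (1 - x)) x :=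
    fun x hx => hasDerivAt_mul_log_add_mul_log_one_sub a hx.1 (by linarith [hx.2])
  refine strictMonoOn_of_deriv_pos (convex_Ioc 0 a)
    (fun x hx => (hderiv x hx).continuousAt.continuousWithinAt) fun x hx => ?_
  rw [interior_Ioc] at hx
  obtain ⟨hx₀, hxa⟩ := hx
  rw [(hderiv x ⟨hx₀, hxa.le⟩).deriv, sub_pos, div_lt_div_iff₀ (by linarith) hx₀]
  nlinarith

lemma klDiv_strictAntiOn {a : ℝ} (ha₀ : 0 < a) (ha₁ : a < 1) :
    StrictAntiOn (klDiv a) (Ioc 0 a) := by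
  intro x hx y hy hxy
  rw [klDiv_eq_sub ha₀ ha₁ hx.1 (by linarith [hx.2]), klDiv_eq_sub ha₀ ha₁ hy.1 (by linarith [hy.2])]
  linarith [strictMonoOn_mul_log_add_mul_log_one_sub ha₁ hx hy hxy]

lemma klDiv_one_div_one_div_lt {α c : ℝ} (hα : 1 < α) (hc : 1 < c) :
    klDiv (1 / α) (1 / (1 + (α - 1) * c)) < log c / α := by
  set S := 1 + (α - 1) * c
  have hS : 0 < S := by nlinarith
  set t := S / (α * c) with ht
  have ht₀ : 0 < t := by positivity
  have ht₁ : t < 1 := by rw [div_lt_one (by positivity)]; nlinarith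
  have hfirst_ratio : 1 / α / (1 / S) = t * c := by rw [ht]; field_simp
  have hsecond_ratio : (1 - 1 / α) / (1 - 1 / S) = t := by
    have : 1 - 1 / S = (α - 1) * c / S := by field_simp; ring
    have hα₁ : α - 1 ≠ 0 := by linarith
    rw [this, ht]
    field_simp
  have hval : klDiv (1 / α) (1 / S) = log t + log c / α := by
    unfold klDiv
    rw [hfirst_ratio, hsecond_ratio, log_mul ht₀.ne' (by positivity)]
    field_simp
    ring
  rw [hval]
  linarith [log_neg ht₀ ht₁]

/-- For all reals `α > 1` and `c > 1`, if `γ` satisfies `1 < γ < 1 + (c−1)/α` and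
`D(1/α ‖ (γ−1)/(c−1)) = ln(c)/α`, then `γ < αc/(1 + (α−1)c)`. -/
theorem stmt3 (α c γ : ℝ) (hα : 1 < α) (hc : 1 < c)
    (h1 : 1 < γ) (h2 : γ < 1 + (c - 1) / α)
    (h3 : klDiv (1 / α) ((γ - 1) / (c - 1)) = Real.log c / α) :
    γ < α * c / (1 + (α - 1) * c) := by
  have hS : 0 < 1 + (α - 1) * c := by nlinarith
  have hc₀ : 0 < c - 1 := by linarith
  have hb₀ : 0 < (γ - 1) / (c - 1) := div_pos (by linarith) hc₀
  have hba : (γ - 1) / (c - 1) ≤ 1 / α := by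
    rw [div_le_div_iff₀ hc₀ (by linarith)]
    nlinarith [(lt_div_iff₀ (by linarith : (0 : ℝ) < α)).mp (sub_lt_iff_lt_add'.mpr h2)]
  have hSa : 1 / (1 + (α - 1) * c) ≤ 1 / α :=
    one_div_le_one_div_of_le (by linarith) (by nlinarith)
  by_contra! hγ
  have hb : 1 / (1 + (α - 1) * c) ≤ (γ - 1) / (c - 1) := by
    rw [div_le_div_iff₀ hS hc₀]
    nlinarith [(div_le_iff₀ hS).mp hγ]
  have hanti := (klDiv_strictAntiOn (by positivity) ((div_lt_one (by linarith)).mpr hα)).antitoneOn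
    ⟨by positivity, hSa⟩ ⟨hb₀, hba⟩ hb
  linarith [klDiv_one_div_one_div_lt hα hc]
end

section
/- Fix a real α > 1 and let h : ℝ → ℝ be any function such that for every c > 1 one has 1 < h(c) < 1 + (c−1)/α and D(1/α ‖ (h(c)−1)/(c−1)) = ln(c)/α. Then h(c) tends to brute(α) = 1 + exp(−α·H(1/α)) as c → ∞. -/
/-- Entropy function `H(p) = −p·ln p − (1−p)·ln(1−p)` (with `0·ln 0 = 0`). -/
noncomputable def entropy (p : ℝ) : ℝ :=
  -p * Real.log p - (1 - p) * Real.log (1 - p)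

/-- `brute(α) = 1 + exp(−α·H(1/α))`. -/
noncomputable def brute (α : ℝ) : ℝ := 1 + Real.exp (-α * entropy (1 / α))

/-!
Put `x = (h(c) − 1)/(c − 1) ∈ (0, 1/α)`. Multiplying the divergence equation by `α` turns it
into `x·c = e^{−α·H(1/α)}·(1 − x)^{1−α}`. The right-hand side is bounded because `x < 1/α`,
so `x → 0`; hence `x·c → e^{−α·H(1/α)}`, and `h(c) = 1 + x·c − x` tends to `brute α`.
-/

open Filter Topology Real

lemma mul_eq_of_klDiv_eq {α x c : ℝ} (hα : 1 < α) (hx0 : 0 < x) (hx1 : x < 1) (hc : 0 < c)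
    (hkl : klDiv (1 / α) x = log c / α) :
    x * c = exp (-α * entropy (1 / α)) * (1 - x) ^ (1 - α) := by
  have hp1 : 1 - 1 / α ≠ 0 := (sub_pos.2 ((div_lt_one (by positivity)).2 hα)).ne'
  have hlog : log x + log c = -α * entropy (1 / α) + log (1 - x) * (1 - α) := by
    rw [klDiv, log_div (by positivity) hx0.ne', log_div hp1 (by linarith)] at hkl
    rw [entropy]
    field_simp at hkl ⊢
    linear_combination -hkl
  rw [rpow_def_of_pos (by linarith), ← exp_add, ← hlog, exp_add, exp_log hx0, exp_log hc]

lemma tendsto_zero_of_mul_le {x : ℝ → ℝ} {M : ℝ} (h0 : ∀ᶠ c in atTop, 0 ≤ x c)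
    (hM : ∀ᶠ c in atTop, x c * c ≤ M) : Tendsto x atTop (𝓝 0) := by
  refine tendsto_of_tendsto_of_tendsto_of_le_of_le' tendsto_const_nhds
    ((tendsto_const_nhds (x := M)).div_atTop tendsto_id) h0 ?_
  filter_upwards [hM, eventually_gt_atTop 0] with c hc hc0
  exact (le_div_iff₀ hc0).2 hc

section KLSolution

variable {α : ℝ} {x : ℝ → ℝ} (hα : 1 < α)
  (hx : ∀ᶠ c in atTop, 0 < x c ∧ x c < 1 / α ∧ klDiv (1 / α) (x c) = log c / α)
include hα hx

lemma eventually_mul_eq_of_klDiv_eq :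
    ∀ᶠ c in atTop, x c * c = exp (-α * entropy (1 / α)) * (1 - x c) ^ (1 - α) := by
  have hp1 : 1 / α < 1 := (div_lt_one (by positivity)).2 hα
  filter_upwards [hx, eventually_gt_atTop 0] with c ⟨hx0, hxp, hkl⟩ hc
  exact mul_eq_of_klDiv_eq hα hx0 (hxp.trans hp1) hc hkl

lemma tendsto_zero_of_klDiv_eq : Tendsto x atTop (𝓝 0) := by
  have hp1 : 0 < 1 - 1 / α := sub_pos.2 ((div_lt_one (by positivity)).2 hα)
  refine tendsto_zero_of_mul_le (hx.mono fun c hc ↦ hc.1.le)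
    (M := exp (-α * entropy (1 / α)) * (1 - 1 / α) ^ (1 - α)) ?_
  filter_upwards [eventually_mul_eq_of_klDiv_eq hα hx, hx] with c hc ⟨_, hxp, _⟩
  rw [hc]
  exact mul_le_mul_of_nonneg_left
    (rpow_le_rpow_of_nonpos hp1 (by linarith) (by linarith)) (exp_pos _).le

lemma tendsto_mul_self_of_klDiv_eq :
    Tendsto (fun c ↦ x c * c) atTop (𝓝 (exp (-α * entropy (1 / α)))) := by
  have hlim : Tendsto (fun c ↦ exp (-α * entropy (1 / α)) * (1 - x c) ^ (1 - α)) atTop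
      (𝓝 (exp (-α * entropy (1 / α)) * (1 - 0) ^ (1 - α))) :=
    ((tendsto_const_nhds.sub (tendsto_zero_of_klDiv_eq hα hx)).rpow_const
      (.inl (by norm_num))).const_mul _
  rw [sub_zero, one_rpow, mul_one] at hlim
  exact hlim.congr' ((eventually_mul_eq_of_klDiv_eq hα hx).mono fun _ hc ↦ hc.symm)

end KLSolution

/-- Fix `α > 1` and let `h` satisfy for every `c > 1` that `1 < h(c) < 1 + (c−1)/α` and
`D(1/α ‖ (h(c)−1)/(c−1)) = ln(c)/α`. Then `h(c) → brute(α)` as `c → ∞`. -/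
theorem stmt6 (α : ℝ) (hα : 1 < α) (h : ℝ → ℝ)
    (hh : ∀ c : ℝ, 1 < c → (1 < h c ∧ h c < 1 + (c - 1) / α) ∧
      klDiv (1 / α) ((h c - 1) / (c - 1)) = Real.log c / α) :
    Filter.Tendsto h Filter.atTop (nhds (brute α)) := by
  set x : ℝ → ℝ := fun c ↦ (h c - 1) / (c - 1)
  have hx : ∀ᶠ c in atTop, 0 < x c ∧ x c < 1 / α ∧ klDiv (1 / α) (x c) = log c / α := by
    filter_upwards [eventually_gt_atTop 1] with c hc
    obtain ⟨⟨h1, h2⟩, hkl⟩ := hh c hc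
    have hc1 : 0 < c - 1 := by linarith
    refine ⟨div_pos (by linarith) hc1, ?_, hkl⟩
    rw [div_lt_iff₀ hc1, one_div_mul_eq_div]
    linarith
  have hlim := tendsto_const_nhds (x := (1 : ℝ)).add
    ((tendsto_mul_self_of_klDiv_eq hα hx).sub (tendsto_zero_of_klDiv_eq hα hx))
  rw [sub_zero] at hlim
  refine hlim.congr' ?_
  filter_upwards [eventually_gt_atTop 1] with c hc
  have : c - 1 ≠ 0 := by linarith
  simp only [x]
  field_simp
  ring
end

section
/- For all reals α ≥ 1 and c > 1, if γ is a real number with 1 < γ < 1 + (c−1)/α and D(1/α ‖ (γ−1)/(c−1)) = ln(c)/α, then γ < brute(α) = 1 + exp(−α·H(1/α)). -/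
open Real Set

lemma convexOn_rpow_neg {β : ℝ} (hβ : 0 ≤ β) : ConvexOn ℝ (Ioi 0) fun s : ℝ ↦ s ^ (-β) := by
  have hlog : ConvexOn ℝ (Ioi 0) fun s : ℝ ↦ -(β * log s) :=
    (strictConcaveOn_log_Ioi.concaveOn.smul hβ).neg
  refine ((convexOn_exp.subset (subset_univ _) ?_).comp hlog (exp_monotone.monotoneOn _)).congr
    fun s hs ↦ ?_
  · rw [convex_iff_isPreconnected]
    exact isPreconnected_Ioi.image _ fun s hs ↦
      ((continuousAt_log (ne_of_gt hs)).const_mul β).neg.continuousWithinAt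
  · simp [rpow_def_of_pos (mem_Ioi.1 hs), mul_comm]

lemma one_sub_mul_rpow_neg_sub_one_le {β q u : ℝ} (hβ : 0 ≤ β) (hq : 0 < q) (hqu : q ≤ u)
    (hu : u ≤ 1) : (1 - q) * (u ^ (-β) - 1) ≤ (1 - u) * (q ^ (-β) - 1) := by
  rcases hqu.eq_or_lt with rfl | hqu
  · exact le_rfl
  have h1q : 0 < 1 - q := by linarith
  obtain ⟨t, hut⟩ : ∃ t, 1 - u = t * (1 - q) := ⟨(1 - u) / (1 - q), by field_simp⟩
  have ht : 0 ≤ t := nonneg_of_mul_nonneg_left (by linarith) h1q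
  have ht1 : t ≤ 1 := by nlinarith
  have hconv := (convexOn_rpow_neg hβ).2 (mem_Ioi.2 hq) (mem_Ioi.2 one_pos) ht
    (sub_nonneg.2 ht1) (add_sub_cancel t 1)
  simp only [smul_eq_mul, one_rpow, mul_one] at hconv
  rw [show t * q + (1 - t) = u by linarith] at hconv
  calc (1 - q) * (u ^ (-β) - 1) ≤ (1 - q) * (t * (q ^ (-β) - 1)) := by gcongr; linarith
    _ = (1 - u) * (q ^ (-β) - 1) := by rw [hut]; ring

lemma mul_log_div_eq_sub (a : ℝ) {b : ℝ} (hb : b ≠ 0) :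
    a * log (a / b) = a * log a - a * log b := by
  rcases eq_or_ne a 0 with rfl | ha
  · simp
  · rw [log_div ha hb, mul_sub]

lemma klDiv_eq_neg_entropy_sub (p : ℝ) {x : ℝ} (hx0 : x ≠ 0) (hx1 : x ≠ 1) :
    klDiv p x = -entropy p - p * log x - (1 - p) * log (1 - x) := by
  rw [klDiv, entropy, mul_log_div_eq_sub p hx0, mul_log_div_eq_sub (1 - p) (sub_ne_zero.2 hx1.symm)]
  ring

lemma exp_neg_mul_entropy_inv {α : ℝ} (hα : 1 ≤ α) :
    exp (-α * entropy (1 / α)) = 1 / α * (1 - 1 / α) ^ (α - 1) := by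
  rcases hα.eq_or_lt with rfl | hα1
  · simp [entropy]
  have hα0 : α ≠ 0 := by positivity
  have hq : 0 < 1 - 1 / α := by rw [sub_pos, div_lt_one] <;> linarith
  have h : -α * entropy (1 / α) = log (1 / α) + log (1 - 1 / α) * (α - 1) := by
    rw [entropy]; field_simp; ring
  rw [h, exp_add, exp_log (by positivity), rpow_def_of_pos hq]

lemma mul_eq_of_klDiv_eq_log_div {α x c : ℝ} (hα : 0 < α) (hx0 : 0 < x) (hx1 : x < 1)
    (hc : 0 < c) (h : klDiv (1 / α) x = log c / α) :
    x * c = exp (-α * entropy (1 / α)) * (1 - x) ^ (-(α - 1)) := by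
  rw [klDiv_eq_neg_entropy_sub _ hx0.ne' hx1.ne, eq_div_iff hα.ne'] at h
  have hlog : log x + log c = -α * entropy (1 / α) + log (1 - x) * (-(α - 1)) := by
    rw [← h]; field_simp; ring
  rw [← exp_log (mul_pos hx0 hc), log_mul hx0.ne' hc.ne', hlog, exp_add,
    rpow_def_of_pos (by linarith)]

lemma inv_mul_rpow_mul_rpow_neg_sub_one_lt {α x : ℝ} (hα : 1 ≤ α) (hx0 : 0 < x)
    (hx : x ≤ 1 / α) :
    1 / α * (1 - 1 / α) ^ (α - 1) * ((1 - x) ^ (-(α - 1)) - 1) < x := by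
  rcases hα.eq_or_lt with rfl | hα1
  · simpa using hx0
  set q := 1 - 1 / α
  have hq : 0 < q := by rw [sub_pos, div_lt_one] <;> linarith
  have hqβ : 0 < q ^ (α - 1) := rpow_pos_of_pos hq _
  have hchord := one_sub_mul_rpow_neg_sub_one_le (by linarith : 0 ≤ α - 1) hq
    (by linarith : q ≤ 1 - x) (by linarith)
  rw [show 1 - q = 1 / α by ring, sub_sub_cancel] at hchord
  calc 1 / α * q ^ (α - 1) * ((1 - x) ^ (-(α - 1)) - 1)
      = q ^ (α - 1) * (1 / α * ((1 - x) ^ (-(α - 1)) - 1)) := by ring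
    _ ≤ q ^ (α - 1) * (x * (q ^ (-(α - 1)) - 1)) := by gcongr
    _ = x * (1 - q ^ (α - 1)) := by
      rw [rpow_neg hq.le]; field_simp
    _ < x := by nlinarith

/-- For all reals `α ≥ 1` and `c > 1`, if `γ` satisfies `1 < γ < 1 + (c−1)/α` and
`D(1/α ‖ (γ−1)/(c−1)) = ln(c)/α`, then `γ < brute(α) = 1 + exp(−α·H(1/α))`. -/
theorem stmt7 (α c γ : ℝ) (hα : 1 ≤ α) (hc : 1 < c)
    (h1 : 1 < γ) (h2 : γ < 1 + (c - 1) / α)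
    (h3 : klDiv (1 / α) ((γ - 1) / (c - 1)) = Real.log c / α) :
    γ < brute α := by
  have hα0 : 0 < α := by linarith
  have hc1 : 0 < c - 1 := by linarith
  set x := (γ - 1) / (c - 1) with hx
  have hx0 : 0 < x := div_pos (by linarith) hc1
  have hxα : x < 1 / α := by
    rw [hx, div_lt_div_iff₀ hc1 hα0]
    nlinarith [(lt_div_iff₀ hα0).1 (by linarith : γ - 1 < (c - 1) / α)]
  have hx1 : x < 1 := hxα.trans_le ((div_le_one hα0).2 hα)
  have hγ : γ - 1 = x * c - x := by rw [hx]; field_simp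
  have hxc := mul_eq_of_klDiv_eq_log_div hα0 hx0 hx1 (by linarith) h3
  have hkey := inv_mul_rpow_mul_rpow_neg_sub_one_lt hα hx0 hxα.le
  rw [exp_neg_mul_entropy_inv hα] at hxc
  rw [brute, exp_neg_mul_entropy_inv hα]
  linarith
end

section
/- For all reals α ≥ 1 and c > 1, if γ is a real number with 1 < γ < 1 + (c−1)/α and D(1/α ‖ (γ−1)/(c−1)) = ln(c)/α, then γ < c^(1/α). -/
/-- For all reals `α ≥ 1` and `c > 1`, if `γ` satisfies `1 < γ < 1 + (c−1)/α` and
`D(1/α ‖ (γ−1)/(c−1)) = ln(c)/α`, then `γ < c^(1/α)`. -/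
theorem stmt8 (α c γ : ℝ) (hα : 1 ≤ α) (hc : 1 < c)
    (h1 : 1 < γ) (h2 : γ < 1 + (c - 1) / α)
    (h3 : klDiv (1 / α) ((γ - 1) / (c - 1)) = Real.log c / α) :
    γ < c ^ (1 / α) := by
  rcases eq_or_lt_of_le hα with hα1 | hα1
  · -- α = 1
    subst hα1
    have h11 : (1 : ℝ) / 1 = 1 := by norm_num
    rw [h11, Real.rpow_one]
    linarith
  -- main case: α > 1
  have hα0 : (0 : ℝ) < α := by linarith
  have hc0 : (0 : ℝ) < c := by linarith
  have hc1 : (0 : ℝ) < c - 1 := by linarith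
  set a : ℝ := 1 / α with ha_def
  set b : ℝ := (γ - 1) / (c - 1) with hb_def
  have ha0 : 0 < a := by positivity
  have ha1 : a < 1 := by rw [ha_def, div_lt_one hα0]; linarith
  have hb0 : 0 < b := div_pos (by linarith) hc1
  have hba : b < a := by
    rw [hb_def, ha_def, div_lt_div_iff₀ hc1 hα0]
    have h2' : (γ - 1) * α < (c - 1) / α * α := by
      have := sub_lt_sub_right h2 1
      simp only [add_sub_cancel_left] at this
      exact mul_lt_mul_of_pos_right this hα0
    rw [div_mul_cancel₀ _ (ne_of_gt hα0)] at h2'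
    linarith
  have hb1 : b < 1 := lt_trans hba ha1
  have h1b : 0 < 1 - b := by linarith
  have h1a : 0 < 1 - a := by linarith
  have hb0' : b ≠ 0 := ne_of_gt hb0
  have h1a' : (1 - a) ≠ 0 := ne_of_gt h1a
  -- notation for the logs
  set L : ℝ := Real.log c with hL_def
  have hL0 : 0 < L := Real.log_pos hc
  set R : ℝ := Real.log (1 - b) - Real.log (1 - a) with hR_def
  have hR0 : 0 < R := by
    have : Real.log (1 - a) < Real.log (1 - b) := Real.log_lt_log h1a (by linarith)
    linarith
  set T : ℝ := Real.log a + Real.log (1 - b) - Real.log b - Real.log (1 - a) with hT_def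
  -- rewrite h3 as a * T = a * L + R
  have hkey : a * T = a * L + R := by
    have h3' : a * (Real.log a - Real.log b)
        + (1 - a) * (Real.log (1 - a) - Real.log (1 - b)) = a * L := by
      rw [klDiv, Real.log_div (ne_of_gt ha0) (ne_of_gt hb0),
        Real.log_div (ne_of_gt h1a) (ne_of_gt h1b)] at h3
      rw [h3, hL_def, ha_def]; ring
    rw [hT_def, hR_def]
    linear_combination h3'
  have haT : 0 < a * T := by nlinarith [mul_pos ha0 hL0]
  have hT0 : 0 < T := by
    by_contra h
    push_neg at h
    nlinarith
  have hLT : L < T := by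
    have h' : a * L < a * T := by linarith [mul_pos ha0 hL0]
    exact lt_of_mul_lt_mul_left h' (le_of_lt ha0)
  set lam : ℝ := L / T with hlam_def
  have hlam0 : 0 < lam := div_pos hL0 hT0
  have hlam1 : lam < 1 := (div_lt_one hT0).mpr hLT
  -- exp T = a(1-b)/(b(1-a))
  have hlogx : Real.log (a * (1 - b) / (b * (1 - a))) = T := by
    rw [Real.log_div (by positivity) (by positivity),
      Real.log_mul (ne_of_gt ha0) (ne_of_gt h1b),
      Real.log_mul (ne_of_gt hb0) (ne_of_gt h1a), hT_def]
    ring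
  have hx_val : Real.exp T = a * (1 - b) / (b * (1 - a)) := by
    rw [← hlogx, Real.exp_log (by positivity)]
  have hxpos : 0 < Real.exp T := Real.exp_pos T
  -- concavity of x ↦ x ^ lam
  have hconc := (Real.concaveOn_rpow (le_of_lt hlam0) (le_of_lt hlam1)).2
    (Set.mem_Ici.mpr (le_of_lt hxpos)) (Set.mem_Ici.mpr zero_le_one)
    (le_of_lt hb0) (by linarith : (0:ℝ) ≤ 1 - b) (by ring)
  simp only [smul_eq_mul, mul_one, Real.one_rpow] at hconc
  -- compute (exp T) ^ lam = c
  have hexpTlam : Real.exp T ^ lam = c := by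
    rw [Real.rpow_def_of_pos hxpos, Real.log_exp, hlam_def,
      mul_div_cancel₀ _ (ne_of_gt hT0)]
    exact Real.exp_log hc0
  -- compute b * exp T + (1 - b) = (1-b)/(1-a)
  have hmix : b * Real.exp T + (1 - b) = (1 - b) / (1 - a) := by
    rw [hx_val]
    field_simp
    ring
  rw [hexpTlam, hmix] at hconc
  -- hconc : b * c + (1 - b) ≤ ((1-b)/(1-a)) ^ lam
  have hγeq : γ = b * c + (1 - b) := by
    have hbc : b * (c - 1) = γ - 1 := by
      rw [hb_def, div_mul_cancel₀ _ (ne_of_gt hc1)]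
    linear_combination -hbc
  have hrhs : ((1 - b) / (1 - a)) ^ lam = Real.exp (R * lam) := by
    rw [Real.rpow_def_of_pos (by positivity),
      Real.log_div (ne_of_gt h1b) (ne_of_gt h1a), ← hR_def]
  have hRlam : R * lam < L * a := by
    have hR_eq : R = a * T - a * L := by linarith
    rw [hlam_def, hR_eq, ← mul_div_assoc, div_lt_iff₀ hT0]
    nlinarith [mul_pos ha0 (mul_pos hL0 hL0)]
  have hca : c ^ a = Real.exp (L * a) := by
    rw [Real.rpow_def_of_pos hc0, ← hL_def]
  calc γ = b * c + (1 - b) := hγeq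
    _ ≤ ((1 - b) / (1 - a)) ^ lam := hconc
    _ = Real.exp (R * lam) := hrhs
    _ < Real.exp (L * a) := Real.exp_lt_exp.mpr hRlam
    _ = c ^ a := hca.symm
end

section
/- For all reals α ≥ 1 and c ≥ 1, one has αc/(1 + (α−1)c) ≤ c^(1/α). -/
/-! Bernoulli's inequality for the concave power `1 - 1/α` gives
`c ^ (1 - 1/α) ≤ (1 + (α - 1) c) / α`, and `c ^ (1 - 1/α) = c / c ^ (1/α)`. -/

theorem Real.rpow_one_sub_inv_le {α c : ℝ} (hα : 1 ≤ α) (hc : 0 ≤ c) :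
    c ^ (1 - 1 / α) ≤ (1 + (α - 1) * c) / α := by
  have hα0 : 0 < α := by linarith
  have hp0 : 0 ≤ 1 - 1 / α := sub_nonneg.mpr ((div_le_one hα0).mpr hα)
  have hp1 : 1 - 1 / α ≤ 1 := sub_le_self _ (by positivity)
  calc c ^ (1 - 1 / α) = (1 + (c - 1)) ^ (1 - 1 / α) := by ring_nf
    _ ≤ 1 + (1 - 1 / α) * (c - 1) := rpow_one_add_le_one_add_mul_self (by linarith) hp0 hp1
    _ = (1 + (α - 1) * c) / α := by field_simp; ring

/-- For all reals `α ≥ 1` and `c ≥ 1`, one has `αc/(1 + (α−1)c) ≤ c^(1/α)`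
(real power). -/
theorem stmt9 (α c : ℝ) (hα : 1 ≤ α) (hc : 1 ≤ c) :
    α * c / (1 + (α - 1) * c) ≤ c ^ (1 / α) := by
  have hα0 : 0 < α := by linarith
  have hc0 : 0 < c := by linarith
  have hroot : 0 < c ^ (1 / α) := Real.rpow_pos_of_pos hc0 _
  have hbound := Real.rpow_one_sub_inv_le hα hc0.le
  rw [Real.rpow_sub hc0, Real.rpow_one, div_le_div_iff₀ hroot hα0] at hbound
  rw [div_le_iff₀ (by nlinarith)]
  linarith
end

section
/- Let x ≥ 0 be a real number and let ε ∈ [−1,1] be a real number with x + ε ≥ 0. Then |x·ln(x) − (x+ε)·ln(x+ε)| ≤ 7 + ln(x+1), where the convention 0·ln 0 = 0 is used. -/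
/-! Put `a = min x (x + ε)` and `b = max x (x + ε)`, so `0 ≤ a ≤ b ≤ a + 1`. If `a < 1`, both
`a ln a` and `b ln b` lie in `[-2, 2]`. If `a ≥ 1`, write
`b ln b - a ln a = b (ln b - ln a) + (b - a) ln a`; the first term is at most `b / a ≤ 2`
by `ln t ≤ t - 1` at `t = b / a`, and the second is at most `ln a`. -/

open Real

lemma abs_mul_log_le_two {y : ℝ} (hy₀ : 0 ≤ y) (hy₂ : y ≤ 2) : |y * log y| ≤ 2 := by
  rcases hy₀.eq_or_lt with rfl | hy₀
  · simp
  rcases le_or_gt y 1 with hy₁ | hy₁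
  · have := abs_log_mul_self_lt y hy₀ hy₁
    rw [mul_comm]
    linarith
  · have hlog₀ : 0 ≤ log y := log_nonneg hy₁.le
    have hlog₁ : log y ≤ y - 1 := log_le_sub_one_of_pos hy₀
    rw [abs_of_nonneg (by positivity)]
    nlinarith

lemma log_sub_log_le_div {a b : ℝ} (ha : 0 < a) (hb : 0 < b) : log b - log a ≤ (b - a) / a := by
  have := log_le_sub_one_of_pos (div_pos hb ha)
  rwa [log_div hb.ne' ha.ne', div_sub_one ha.ne'] at this

lemma abs_mul_log_sub_mul_log_le_of_one_le {a b : ℝ} (ha : 1 ≤ a) (hab : a ≤ b)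
    (hba : b ≤ a + 1) : |b * log b - a * log a| ≤ 2 + log (a + 1) := by
  have ha₀ : 0 < a := by linarith
  have hlog_a : 0 ≤ log a := log_nonneg ha
  have hlog_mono : log a ≤ log b := log_le_log ha₀ hab
  have hratio : b * (log b - log a) ≤ 2 := calc
    b * (log b - log a) ≤ b * ((b - a) / a) :=
      mul_le_mul_of_nonneg_left (log_sub_log_le_div ha₀ (by linarith)) (by linarith)
    _ ≤ 2 := by rw [mul_div_assoc', div_le_iff₀ ha₀]; nlinarith
  have hshift : (b - a) * log a ≤ log (a + 1) := calc
    (b - a) * log a ≤ 1 * log a := by gcongr; linarith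
    _ ≤ log (a + 1) := by rw [one_mul]; exact log_le_log ha₀ (by linarith)
  have hsplit : b * log b - a * log a = b * (log b - log a) + (b - a) * log a := by ring
  rw [abs_of_nonneg (by rw [hsplit]; nlinarith), hsplit]
  linarith

lemma abs_mul_log_sub_mul_log_le {a b : ℝ} (ha : 0 ≤ a) (hab : a ≤ b) (hba : b ≤ a + 1) :
    |b * log b - a * log a| ≤ 4 + log (a + 1) := by
  have hlog : 0 ≤ log (a + 1) := log_nonneg (by linarith)
  rcases lt_or_ge a 1 with ha₁ | ha₁
  · calc |b * log b - a * log a| ≤ |b * log b| + |a * log a| := abs_sub _ _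
      _ ≤ 2 + 2 := add_le_add (abs_mul_log_le_two (by linarith) (by linarith))
          (abs_mul_log_le_two ha (by linarith))
      _ ≤ 4 + log (a + 1) := by linarith
  · linarith [abs_mul_log_sub_mul_log_le_of_one_le ha₁ hab hba]

/-- Let `x ≥ 0` and `ε ∈ [−1,1]` with `x + ε ≥ 0`. Then
`|x·ln(x) − (x+ε)·ln(x+ε)| ≤ 7 + ln(x+1)` (the convention `0·ln 0 = 0` holds
automatically since `Real.log 0 = 0`). -/
theorem stmt10 (x ε : ℝ) (hx : 0 ≤ x) (hε : ε ∈ Set.Icc (-1 : ℝ) 1)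
    (hxε : 0 ≤ x + ε) :
    |x * Real.log x - (x + ε) * Real.log (x + ε)| ≤ 7 + Real.log (x + 1) := by
  obtain ⟨hε₁, hε₂⟩ := hε
  rcases le_total 0 ε with hε₀ | hε₀
  · rw [abs_sub_comm]
    linarith [abs_mul_log_sub_mul_log_le hx (le_add_of_nonneg_right hε₀) (by linarith)]
  · have hlog : log (x + ε + 1) ≤ log (x + 1) := log_le_log (by linarith) (by linarith)
    linarith [abs_mul_log_sub_mul_log_le hxε (by linarith : x + ε ≤ x) (by linarith)]
end

section
/- There exists a constant C > 0 such that for every real n ≥ 2 and all reals a, b, ε, δ with 0 ≤ b ≤ a ≤ n, ε ∈ [−1,1], δ ∈ [−1,1], a + ε ≥ 0 and 0 ≤ b + δ ≤ a + ε, one has |a·H(b/a) − (a+ε)·H((b+δ)/(a+ε))| ≤ C·ln(n), where a term of the form x·H(y/x) is interpreted as 0 when x = 0. -/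
/-! With `φ(x) = -x log x`, one has `a·H(b/a) = φ(b) + φ(a - b) - φ(a)`, so the difference splits
into three increments of `φ` of size at most 2 on `[0, n + 1]`. On such an interval `φ` can
decrease by at most `2 (log (n + 1) + 1)` (tangent-line bound from concavity) and increase by at
most `1` (as `φ ≤ 1`, `φ ≥ 0` on `[0, 1]` and `φ` decreases on `[1, ∞)`), which gives
`O(log n)`. -/

open Real

lemma mul_entropy_div (a b : ℝ) :
    a * entropy (b / a) = negMulLog b + negMulLog (a - b) - negMulLog a := by
  rcases eq_or_ne a 0 with rfl | ha
  -- both sides vanish since `log (-b) = log b`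
  · simp [negMulLog, log_neg_eq_log]
  have hb : negMulLog b = b / a * negMulLog a + a * negMulLog (b / a) := by
    rw [← negMulLog_mul, mul_div_cancel₀ b ha]
  have hab : negMulLog (a - b) = (1 - b / a) * negMulLog a + a * negMulLog (1 - b / a) := by
    rw [← negMulLog_mul, mul_sub, mul_one, mul_div_cancel₀ b ha]
  rw [hb, hab]
  simp only [entropy, negMulLog]
  field_simp
  ring

lemma negMulLog_sub_negMulLog_le_one {s t : ℝ} (hs : 0 ≤ s) (hst : s ≤ t) :
    negMulLog t - negMulLog s ≤ 1 := by
  rcases le_total s 1 with hs1 | hs1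
  · linarith [negMulLog_nonneg hs hs1, negMulLog_le_one_sub_self (hs.trans hst)]
  · have : s * log s ≤ t * log t :=
      mul_le_mul hst (log_le_log (by linarith) hst) (log_nonneg hs1) (by linarith)
    simp only [negMulLog_eq_neg]
    linarith

lemma negMulLog_sub_negMulLog_le {s t : ℝ} (hs : 0 ≤ s) (hst : s ≤ t) :
    negMulLog s - negMulLog t ≤ (t - s) * (log t + 1) := by
  rcases hs.eq_or_lt with rfl | hs
  · simp [negMulLog, mul_add, hst]
  have hlog : s * (log t - log s) ≤ t - s := by
    have := mul_le_mul_of_nonneg_left (log_le_sub_one_of_pos (div_pos (hs.trans_le hst) hs)) hs.le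
    rwa [log_div (by linarith) hs.ne', mul_sub_one, mul_div_cancel₀ t hs.ne'] at this
  simp only [negMulLog_eq_neg]
  linarith

lemma abs_negMulLog_sub_le {s t M : ℝ} (hs : 0 ≤ s) (ht : 0 ≤ t) (hsM : s ≤ M) (htM : t ≤ M)
    (hM : 1 ≤ M) : |negMulLog t - negMulLog s| ≤ |t - s| * (log M + 1) + 1 := by
  wlog hst : s ≤ t generalizing s t
  · rw [abs_sub_comm, abs_sub_comm t]
    exact this ht hs htM hsM (le_of_not_ge hst)
  have hlogM : 0 ≤ (t - s) * (log M + 1) :=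
    mul_nonneg (by linarith) (by linarith [log_nonneg hM])
  rw [abs_of_nonneg (sub_nonneg.2 hst), abs_le]
  constructor
  · rcases (hs.trans hst).eq_or_lt with rfl | ht
    · simp [le_antisymm hst hs]
    have : (t - s) * (log t + 1) ≤ (t - s) * (log M + 1) := by gcongr
    linarith [negMulLog_sub_negMulLog_le hs hst]
  · linarith [negMulLog_sub_negMulLog_le_one hs hst]

/-- There is a constant `C > 0` such that for every real `n ≥ 2` and all reals
`a, b, ε, δ` with `0 ≤ b ≤ a ≤ n`, `ε, δ ∈ [−1,1]`, `a + ε ≥ 0` and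
`0 ≤ b + δ ≤ a + ε`, one has `|a·H(b/a) − (a+ε)·H((b+δ)/(a+ε))| ≤ C·ln(n)`.
(When `a = 0` the term `a · H(b/a)` equals `0`, matching the convention, since in
Lean `b/0 = 0` and `H(0) = 0`.) -/
theorem stmt11 :
    ∃ C : ℝ, 0 < C ∧ ∀ n a b ε δ : ℝ, 2 ≤ n →
      0 ≤ b → b ≤ a → a ≤ n →
      ε ∈ Set.Icc (-1 : ℝ) 1 → δ ∈ Set.Icc (-1 : ℝ) 1 →
      0 ≤ a + ε → 0 ≤ b + δ → b + δ ≤ a + ε →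
      |a * entropy (b / a) - (a + ε) * entropy ((b + δ) / (a + ε))| ≤
        C * Real.log n := by
  refine ⟨30, by norm_num, ?_⟩
  intro n a b ε δ hn hb hba han ⟨hε₁, hε₂⟩ ⟨hδ₁, hδ₂⟩ haε hbδ hbδaε
  have hlog_succ : log (n + 1) ≤ 2 * log n := by
    rw [two_mul, ← log_mul (by positivity) (by positivity)]
    exact log_le_log (by positivity) (by nlinarith)
  have hone : 1 ≤ 2 * log n := by
    have := log_le_log (by norm_num) hn
    linarith [log_two_gt_d9]
  have hincrement : ∀ s t, 0 ≤ s → 0 ≤ t → s ≤ n + 1 → t ≤ n + 1 → |t - s| ≤ 2 →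
      |negMulLog t - negMulLog s| ≤ 10 * log n := fun s t hs ht hsn htn hts => by
    have := abs_negMulLog_sub_le hs ht hsn htn (by linarith)
    nlinarith [abs_nonneg (t - s)]
  have h₁ := hincrement b (b + δ) hb hbδ (by linarith) (by linarith) (abs_le.2 ⟨by linarith, by linarith⟩)
  have h₂ := hincrement (a - b) (a + ε - (b + δ)) (by linarith) (by linarith) (by linarith)
    (by linarith) (abs_le.2 ⟨by linarith, by linarith⟩)
  have h₃ := hincrement a (a + ε) (hb.trans hba) haε (by linarith) (by linarith)
    (abs_le.2 ⟨by linarith, by linarith⟩)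
  rw [mul_entropy_div, mul_entropy_div, abs_le]
  rw [abs_le] at h₁ h₂ h₃
  constructor <;> linarith
end

section
/- Let α ≥ 1 be a real number and set brute(α) = 1 + exp(−α·H(1/α)). There exists a constant C > 0 such that for every natural number n ≥ 2: n^(−C) · brute(α)^n ≤ max_{k ∈ ℕ, k < n/α} C(n,k) / C(⌊αk⌋, k) ≤ n^C · brute(α)^n. -/
/-- The set of naturals `k` with `k < n/α` is nonempty (it contains `0`). -/
lemma ratioSet_nonempty (α : ℝ) (hα : 1 ≤ α) (n : ℕ) (hn : 2 ≤ n) :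
    ((Finset.range n).filter (fun k : ℕ => (k : ℝ) < (n : ℝ) / α)).Nonempty := by
  refine ⟨0, Finset.mem_filter.mpr ⟨Finset.mem_range.mpr (by omega), ?_⟩⟩
  have h0 : (0 : ℝ) < (n : ℝ) := by exact_mod_cast (by omega : 0 < n)
  simpa using div_pos h0 (lt_of_lt_of_le zero_lt_one hα)

open Real Finset

section BinomialTerms

variable {p q : ℝ} {m k : ℕ}

lemma choose_mul_pow_mul_pow_le_add_pow (hp : 0 ≤ p) (hq : 0 ≤ q) (hk : k ≤ m) :
    m.choose k * p ^ k * q ^ (m - k) ≤ (p + q) ^ m := by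
  rw [add_pow]
  calc (m.choose k : ℝ) * p ^ k * q ^ (m - k) = p ^ k * q ^ (m - k) * m.choose k := by ring
    _ ≤ _ := single_le_sum (f := fun j => p ^ j * q ^ (m - j) * m.choose j)
      (fun j _ => by positivity) (mem_range.2 (Nat.lt_succ_of_le hk))

lemma choose_succ_mul_pow_mul_pow {j : ℕ} (hj : j < m) :
    m.choose (j + 1) * p ^ (j + 1) * q ^ (m - (j + 1)) * ((j + 1) * q) =
      m.choose j * p ^ j * q ^ (m - j) * ((m - j) * p) := by
  have hchoose : (m.choose (j + 1) : ℝ) * (j + 1) = m.choose j * (m - j) := by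
    have := congrArg (Nat.cast (R := ℝ)) (Nat.choose_succ_right_eq m j)
    push_cast [Nat.cast_sub hj.le] at this
    exact this
  rw [show m - j = m - (j + 1) + 1 by omega, pow_succ, pow_succ]
  linear_combination p ^ j * p * q ^ (m - (j + 1)) * q * hchoose

lemma choose_mul_pow_mul_pow_le_of_mode (hp : 0 ≤ p) (hq : 0 < q)
    (h₁ : k * q ≤ (m - k + 1) * p) (h₂ : (m - k) * p ≤ (k + 1) * q) (j : ℕ) :
    m.choose j * p ^ j * q ^ (m - j) ≤ m.choose k * p ^ k * q ^ (m - k) := by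
  set a : ℕ → ℝ := fun j => m.choose j * p ^ j * q ^ (m - j)
  have hk : k ≤ m := by
    by_contra! h
    have : (m : ℝ) - k + 1 ≤ 0 := by
      have : (m : ℝ) + 1 ≤ k := by exact_mod_cast h
      linarith
    have : (k : ℝ) * q ≤ 0 := h₁.trans (mul_nonpos_of_nonpos_of_nonneg this hp)
    have : (0 : ℝ) < k * q := mul_pos (by exact_mod_cast (by omega : 0 < k)) hq
    linarith
  have up : MonotoneOn a (Set.Iic k) := by
    refine monotoneOn_of_le_succ Set.ordConnected_Iic fun j _ _ hj => ?_
    rw [Order.succ_eq_add_one] at hj ⊢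
    have hj' : (j : ℝ) + 1 ≤ k := by exact_mod_cast hj
    refine le_of_mul_le_mul_right ?_ (by positivity : (0 : ℝ) < (j + 1) * q)
    rw [choose_succ_mul_pow_mul_pow (lt_of_lt_of_le (Nat.lt_succ_self j) (hj.trans hk))]
    exact mul_le_mul_of_nonneg_left (by nlinarith) (by positivity)
  have down : AntitoneOn a (Set.Ici k) := by
    refine antitoneOn_nat_Ici_of_succ_le fun j hj => ?_
    rcases lt_or_ge j m with hjm | hjm
    · have hj' : (k : ℝ) ≤ j := by exact_mod_cast hj
      refine le_of_mul_le_mul_right ?_ (by positivity : (0 : ℝ) < (j + 1) * q)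
      rw [choose_succ_mul_pow_mul_pow hjm]
      exact mul_le_mul_of_nonneg_left (by nlinarith) (by positivity)
    · simp [a, Nat.choose_eq_zero_of_lt (by omega : m < j + 1)]
      positivity
  rcases le_total j k with hjk | hkj
  · exact up hjk (Set.mem_Iic.2 le_rfl) hjk
  · exact down (Set.mem_Ici.2 le_rfl) hkj hkj

lemma add_pow_le_succ_mul_of_mode (hp : 0 ≤ p) (hq : 0 < q)
    (h₁ : k * q ≤ (m - k + 1) * p) (h₂ : (m - k) * p ≤ (k + 1) * q) :
    (p + q) ^ m ≤ (m + 1) * (m.choose k * p ^ k * q ^ (m - k)) := by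
  rw [add_pow]
  calc ∑ j ∈ range (m + 1), p ^ j * q ^ (m - j) * m.choose j
      ≤ ∑ _j ∈ range (m + 1), (m.choose k * p ^ k * q ^ (m - k) : ℝ) :=
        sum_le_sum fun j _ => by
          linarith [choose_mul_pow_mul_pow_le_of_mode hp hq h₁ h₂ j]
    _ = _ := by simp

end BinomialTerms

noncomputable def bruteWeight (α : ℝ) : ℝ := exp (-α * entropy (1 / α))

lemma brute_eq_one_add_bruteWeight (α : ℝ) : brute α = 1 + bruteWeight α := rfl

section Entropy

variable {α : ℝ}

lemma bruteWeight_eq (hα : 1 ≤ α) : bruteWeight α = α⁻¹ * (1 - α⁻¹) ^ (α - 1) := by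
  rcases hα.eq_or_lt with rfl | hα
  · simp [bruteWeight, entropy]
  have hq : 0 < 1 - α⁻¹ := sub_pos.2 (inv_lt_one_of_one_lt₀ hα)
  have hα₀ : 0 < α := by linarith
  rw [bruteWeight, ← exp_log (by positivity : 0 < α⁻¹ * (1 - α⁻¹) ^ (α - 1)),
    log_mul (by positivity) (by positivity), log_rpow hq, entropy, one_div]
  congr 1
  field_simp
  ring

lemma bruteWeight_pos (α : ℝ) : 0 < bruteWeight α := exp_pos _

lemma bruteWeight_le_inv (hα : 1 ≤ α) : bruteWeight α ≤ α⁻¹ := by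
  rw [bruteWeight_eq hα]
  have hq : 1 - α⁻¹ ≤ 1 := by simp; positivity
  exact mul_le_of_le_one_right (by positivity)
    (rpow_le_one (sub_nonneg.2 (inv_le_one_of_one_le₀ hα)) hq (by linarith))

lemma bruteWeight_pow_eq (hα : 1 ≤ α) (k : ℕ) :
    bruteWeight α ^ k = α⁻¹ ^ k * (1 - α⁻¹) ^ ((α - 1) * k) := by
  rw [bruteWeight_eq hα, mul_pow, rpow_mul (sub_nonneg.2 (inv_le_one_of_one_le₀ hα)),
    rpow_natCast]

end Entropy

section FloorBinomial

variable {α : ℝ}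

lemma le_floor_mul_natCast (hα : 1 ≤ α) (k : ℕ) : k ≤ ⌊α * k⌋₊ :=
  Nat.le_floor (by nlinarith [(Nat.cast_nonneg k : (0 : ℝ) ≤ k)])

lemma pow_sub_eq_rpow {x : ℝ} {m k : ℕ} (hk : k ≤ m) : x ^ (m - k) = x ^ ((m : ℝ) - k) := by
  rw [← Nat.cast_sub hk, rpow_natCast]

lemma choose_floor_mul_mul_bruteWeight_pow_le_one (hα : 1 ≤ α) (k : ℕ) :
    (⌊α * k⌋₊.choose k : ℝ) * bruteWeight α ^ k ≤ 1 := by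
  set m := ⌊α * k⌋₊
  have hkm : k ≤ m := le_floor_mul_natCast hα k
  have hm : (m : ℝ) ≤ α * k := Nat.floor_le (by positivity)
  have hp : 0 ≤ α⁻¹ := by positivity
  have hq : 0 ≤ 1 - α⁻¹ := sub_nonneg.2 (inv_le_one_of_one_le₀ hα)
  calc (m.choose k : ℝ) * bruteWeight α ^ k
      ≤ m.choose k * α⁻¹ ^ k * (1 - α⁻¹) ^ (m - k) := by
        rw [bruteWeight_pow_eq hα, pow_sub_eq_rpow hkm, ← mul_assoc]
        have hkm' : (k : ℝ) ≤ m := by exact_mod_cast hkm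
        exact mul_le_mul_of_nonneg_left (rpow_le_rpow_of_exponent_ge' hq (by simp; positivity)
          (by linarith) (by linarith)) (by positivity)
    _ ≤ (α⁻¹ + (1 - α⁻¹)) ^ m := choose_mul_pow_mul_pow_le_add_pow hp hq hkm
    _ = 1 := by simp

lemma one_sub_inv_le_succ_mul_choose_floor_mul (hα : 1 < α) (k : ℕ) :
    1 - α⁻¹ ≤ (⌊α * k⌋₊ + 1) * (⌊α * k⌋₊.choose k * bruteWeight α ^ k) := by
  set m := ⌊α * k⌋₊
  have hα₀ : 0 < α := by linarith
  have hkm : k ≤ m := le_floor_mul_natCast hα.le k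
  have hm : (m : ℝ) ≤ α * k := Nat.floor_le (by positivity)
  have hm' : α * k < m + 1 := Nat.lt_floor_add_one _
  have hp : 0 ≤ α⁻¹ := by positivity
  have hq : 0 < 1 - α⁻¹ := sub_pos.2 (inv_lt_one_of_one_lt₀ hα)
  have hαinv : α * α⁻¹ = 1 := mul_inv_cancel₀ hα₀.ne'
  have h₁ : k * (1 - α⁻¹) ≤ (m - k + 1) * α⁻¹ := by nlinarith
  have h₂ : (m - k) * α⁻¹ ≤ (k + 1) * (1 - α⁻¹) := by nlinarith
  calc 1 - α⁻¹ = (1 - α⁻¹) * (α⁻¹ + (1 - α⁻¹)) ^ m := by simp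
    _ ≤ (1 - α⁻¹) * ((m + 1) * (m.choose k * α⁻¹ ^ k * (1 - α⁻¹) ^ (m - k))) := by
        gcongr
        exact add_pow_le_succ_mul_of_mode hp hq h₁ h₂
    _ = (m + 1) * (m.choose k * (α⁻¹ ^ k * (1 - α⁻¹) ^ ((m : ℝ) - k + 1))) := by
        rw [pow_sub_eq_rpow hkm, rpow_add_one hq.ne']
        ring
    _ ≤ (m + 1) * (m.choose k * bruteWeight α ^ k) := by
        rw [bruteWeight_pow_eq hα.le]
        refine mul_le_mul_of_nonneg_left (mul_le_mul_of_nonneg_left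
          (mul_le_mul_of_nonneg_left ?_ (by positivity)) (by positivity)) (by positivity)
        exact rpow_le_rpow_of_exponent_ge' hq.le (by simp; positivity) (by nlinarith) (by linarith)

end FloorBinomial

section Ratio

variable {α : ℝ}

lemma brute_one : brute 1 = 2 := by norm_num [brute, entropy]

lemma brute_pos (α : ℝ) : 0 < brute α := by
  linarith [bruteWeight_pos α, brute_eq_one_add_bruteWeight α]

lemma brute_le_two (hα : 1 ≤ α) : brute α ≤ 2 := by
  rw [brute_eq_one_add_bruteWeight]
  linarith [bruteWeight_le_inv hα, inv_le_one_of_one_le₀ hα]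

lemma choose_mul_bruteWeight_pow_le_brute_pow {n k : ℕ} (hk : k ≤ n) :
    n.choose k * bruteWeight α ^ k ≤ brute α ^ n := by
  simpa [brute_eq_one_add_bruteWeight, add_comm] using
    choose_mul_pow_mul_pow_le_add_pow (bruteWeight_pos α).le zero_le_one hk

lemma choose_floor_mul_pos (hα : 1 ≤ α) (k : ℕ) : 0 < (⌊α * k⌋₊.choose k : ℝ) := by
  exact_mod_cast Nat.choose_pos (le_floor_mul_natCast hα k)

lemma exists_choose_div_choose_floor_le (hα : 1 ≤ α) :
    ∃ A : ℝ, ∀ n k : ℕ, α * k < n →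
      (n.choose k : ℝ) / ⌊α * k⌋₊.choose k ≤ A * n * brute α ^ n := by
  rcases hα.eq_or_lt with rfl | hα
  · refine ⟨1, fun n k hk => ?_⟩
    have hn : (1 : ℝ) ≤ n := by
      have : 0 < n := by exact_mod_cast (by positivity : (0 : ℝ) ≤ 1 * k).trans_lt hk
      exact_mod_cast this
    simp only [one_mul, Nat.floor_natCast, Nat.choose_self, Nat.cast_one, div_one, brute_one]
    calc (n.choose k : ℝ) ≤ 2 ^ n := by exact_mod_cast Nat.choose_le_two_pow n k
      _ ≤ n * 2 ^ n := le_mul_of_one_le_left (by positivity) hn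
  refine ⟨(1 - α⁻¹)⁻¹, fun n k hk => ?_⟩
  have hm := choose_floor_mul_pos hα.le k
  set m := ⌊α * k⌋₊
  have hq : 0 < 1 - α⁻¹ := sub_pos.2 (inv_lt_one_of_one_lt₀ hα)
  have hmn : m < n := by exact_mod_cast (Nat.floor_le (by positivity)).trans_lt hk
  have hkn : k ≤ n := (le_floor_mul_natCast hα.le k).trans hmn.le
  calc (n.choose k : ℝ) / m.choose k
      ≤ n.choose k / m.choose k * ((m + 1) * (m.choose k * bruteWeight α ^ k) / (1 - α⁻¹)) :=
        le_mul_of_one_le_right (by positivity)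
          ((one_le_div hq).2 (one_sub_inv_le_succ_mul_choose_floor_mul hα k))
    _ = (m + 1) / (1 - α⁻¹) * (n.choose k * bruteWeight α ^ k) := by field_simp
    _ ≤ n / (1 - α⁻¹) * brute α ^ n := by
        have hmn' : (m : ℝ) + 1 ≤ n := by exact_mod_cast hmn
        exact mul_le_mul (div_le_div_of_nonneg_right hmn' hq.le)
          (choose_mul_bruteWeight_pow_le_brute_pow hkn)
          (by have := bruteWeight_pos α; positivity) (by positivity)
    _ = (1 - α⁻¹)⁻¹ * n * brute α ^ n := by ring

lemma choose_mul_bruteWeight_pow_le_choose_div (hα : 1 ≤ α) (n k : ℕ) :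
    n.choose k * bruteWeight α ^ k ≤ (n.choose k : ℝ) / ⌊α * k⌋₊.choose k := by
  rw [le_div_iff₀ (choose_floor_mul_pos hα k), mul_assoc, mul_comm (bruteWeight α ^ k)]
  exact mul_le_of_le_one_right (by positivity) (choose_floor_mul_mul_bruteWeight_pow_le_one hα k)

/-- For `α < n` the witness is the mode `⌊(n+1) r/(1+r)⌋` of the terms `C(n,k) rᵏ` of
`brute α ^ n = (1 + r) ^ n`; it lies below `n/α` because `r ≤ 1/α`. -/
lemma exists_brute_pow_le (hα : 1 ≤ α) {n : ℕ} (hn : 0 < n) :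
    ∃ k : ℕ, α * k < n ∧
      brute α ^ n ≤ 2 ^ α * (n + 1) * ((n.choose k : ℝ) / ⌊α * k⌋₊.choose k) := by
  have hα₀ : 0 < α := by linarith
  have h2α : (1 : ℝ) ≤ 2 ^ α := one_le_rpow (by norm_num) hα₀.le
  rcases le_or_gt (n : ℝ) α with hnα | hnα
  · refine ⟨0, by simpa using hn, ?_⟩
    calc brute α ^ n ≤ 2 ^ (n : ℝ) := by
          rw [rpow_natCast]
          exact pow_le_pow_left₀ (brute_pos α).le (brute_le_two hα) n
      _ ≤ 2 ^ α := rpow_le_rpow_of_exponent_le (by norm_num) hnα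
      _ ≤ 2 ^ α * (n + 1) := le_mul_of_one_le_right (by positivity) (by linarith)
      _ = _ := by simp
  set r := bruteWeight α
  have hr : 0 < r := bruteWeight_pos α
  have hrα : r ≤ α⁻¹ := bruteWeight_le_inv hα
  set k := ⌊(n + 1) * r / (1 + r)⌋₊
  have hk₁ : k * (1 + r) ≤ (n + 1) * r :=
    (le_div_iff₀ (by positivity)).1 (Nat.floor_le (by positivity))
  have hk₂ : (n + 1) * r < (k + 1) * (1 + r) :=
    (div_lt_iff₀ (by positivity)).1 (Nat.lt_floor_add_one _)
  have hmode := add_pow_le_succ_mul_of_mode hr.le one_pos (m := n) (k := k)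
    (by linarith) (by linarith)
  have hkα : (k : ℝ) * (α + 1) ≤ n + 1 := by
    have hrα' : r * α ≤ 1 := by simpa [hα₀.ne'] using mul_le_mul_of_nonneg_right hrα hα₀.le
    refine le_of_mul_le_mul_right ?_ (by positivity : 0 < 1 + r)
    calc (k : ℝ) * (α + 1) * (1 + r) = k * (1 + r) * (α + 1) := by ring
      _ ≤ (n + 1) * r * (α + 1) := by gcongr
      _ = (n + 1) * (r * α + r) := by ring
      _ ≤ (n + 1) * (1 + r) := by gcongr
  refine ⟨k, ?_, ?_⟩
  · nlinarith
  calc brute α ^ n = (r + 1) ^ n := by rw [brute_eq_one_add_bruteWeight, add_comm]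
    _ ≤ (n + 1) * (n.choose k * r ^ k) := by simpa using hmode
    _ ≤ (n + 1) * ((n.choose k : ℝ) / ⌊α * k⌋₊.choose k) :=
        mul_le_mul_of_nonneg_left (choose_mul_bruteWeight_pow_le_choose_div hα n k)
          (by positivity)
    _ ≤ _ := by
        rw [mul_assoc]
        exact le_mul_of_one_le_left (by positivity) h2α

end Ratio

section PolynomialFactors

variable {x α : ℝ}

lemma rpow_add_two_add_natCast (hx : 0 < x) (N : ℕ) :
    x ^ (α + 2 + N) = x ^ α * x ^ 2 * x ^ N := by
  rw [rpow_add hx, rpow_add hx, rpow_two, rpow_natCast]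

lemma two_rpow_mul_add_one_le_rpow (hx : 2 ≤ x) (hα : 0 ≤ α) (N : ℕ) :
    2 ^ α * (x + 1) ≤ x ^ (α + 2 + N) := by
  rw [rpow_add_two_add_natCast (by linarith)]
  have h₁ : 2 ^ α ≤ x ^ α := rpow_le_rpow (by norm_num) hx hα
  have h₂ : x + 1 ≤ x ^ 2 := by nlinarith
  have h₃ : 1 ≤ x ^ N := one_le_pow₀ (by linarith)
  calc 2 ^ α * (x + 1) ≤ x ^ α * x ^ 2 * 1 := by rw [mul_one]; gcongr
    _ ≤ _ := by gcongr

lemma two_pow_mul_le_rpow (hx : 2 ≤ x) (hα : 0 ≤ α) (N : ℕ) :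
    2 ^ N * x ≤ x ^ (α + 2 + N) := by
  rw [rpow_add_two_add_natCast (by linarith)]
  have h₁ : 1 ≤ x ^ α := one_le_rpow (by linarith) hα
  have h₂ : x ≤ x ^ 2 := by nlinarith
  have h₃ : 2 ^ N ≤ x ^ N := pow_le_pow_left₀ (by norm_num) hx N
  calc 2 ^ N * x ≤ 1 * x ^ 2 * x ^ N := by rw [one_mul, mul_comm]; gcongr
    _ ≤ _ := by gcongr

end PolynomialFactors

lemma mem_filter_lt_div_iff {α : ℝ} (hα : 1 ≤ α) {n k : ℕ} :
    k ∈ (range n).filter (fun k : ℕ => (k : ℝ) < n / α) ↔ α * k < n := by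
  have hα₀ : 0 < α := by linarith
  rw [mem_filter, mem_range, lt_div_iff₀ hα₀, mul_comm]
  refine ⟨And.right, fun h => ⟨?_, h⟩⟩
  exact_mod_cast (le_mul_of_one_le_left (Nat.cast_nonneg k) hα).trans_lt h

/-- For `α ≥ 1` there is a constant `C > 0` such that for every `n ≥ 2`,
`n^(−C) · brute(α)^n ≤ max_{k ∈ ℕ, k < n/α} C(n,k)/C(⌊αk⌋,k) ≤ n^C · brute(α)^n`. -/
theorem stmt14 (α : ℝ) (hα : 1 ≤ α) :
    ∃ C : ℝ, 0 < C ∧ ∀ (n : ℕ) (hn : 2 ≤ n),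
      (n : ℝ) ^ (-C) * brute α ^ n ≤
        ((Finset.range n).filter (fun k : ℕ => (k : ℝ) < (n : ℝ) / α)).sup'
          (ratioSet_nonempty α hα n hn)
          (fun k => (n.choose k : ℝ) / ((⌊α * (k : ℝ)⌋₊).choose k : ℝ)) ∧
      ((Finset.range n).filter (fun k : ℕ => (k : ℝ) < (n : ℝ) / α)).sup'
          (ratioSet_nonempty α hα n hn)
          (fun k => (n.choose k : ℝ) / ((⌊α * (k : ℝ)⌋₊).choose k : ℝ)) ≤
        (n : ℝ) ^ C * brute α ^ n := by
  obtain ⟨A, hA⟩ := exists_choose_div_choose_floor_le hα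
  obtain ⟨N, hN⟩ := pow_unbounded_of_one_lt A one_lt_two
  have hα₀ : 0 ≤ α := by linarith
  refine ⟨α + 2 + N, by positivity, fun n hn => ?_⟩
  have hn' : (2 : ℝ) ≤ n := by exact_mod_cast hn
  have hbrute_nonneg := (brute_pos α).le
  constructor
  · obtain ⟨k, hk, hlower⟩ := exists_brute_pow_le hα (n := n) (by omega)
    refine le_trans ?_ (le_sup' _ ((mem_filter_lt_div_iff hα).2 hk))
    rw [rpow_neg (by positivity), inv_mul_le_iff₀ (by positivity)]
    exact hlower.trans (by gcongr; exact two_rpow_mul_add_one_le_rpow hn' hα₀ N)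
  · refine sup'_le _ _ fun k hk => (hA n k ((mem_filter_lt_div_iff hα).1 hk)).trans ?_
    calc A * n * brute α ^ n ≤ 2 ^ N * n * brute α ^ n := by gcongr
      _ ≤ _ := by gcongr; exact two_pow_mul_le_rpow hn' hα₀ N
end

section
/- Let n, n′, k, k′, d be natural numbers with |n − n′| ≤ d, |k − k′| ≤ d, k ≤ n, k′ ≤ n′ and n + n′ ≥ 1. Then C(n,k) · (n+n′)^(−3d) ≤ C(n′,k′) ≤ C(n,k) · (n+n′)^(3d), i.e., C(n,k) ≤ C(n′,k′)·(n+n′)^(3d) and C(n′,k′) ≤ C(n,k)·(n+n′)^(3d). -/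
private lemma s1 (n m : ℕ) : n.choose (m+1) ≤ n.choose m * n :=
  calc n.choose (m+1) ≤ n.choose (m+1) * (m+1) := Nat.le_mul_of_pos_right _ (Nat.succ_pos m)
    _ = n.choose m * (n - m) := Nat.choose_succ_right_eq n m
    _ ≤ n.choose m * n := Nat.mul_le_mul_left _ (Nat.sub_le n m)

private lemma s2 (n m : ℕ) (h : m + 1 ≤ n) : n.choose m ≤ n.choose (m+1) * n :=
  calc n.choose m ≤ n.choose m * (n - m) := Nat.le_mul_of_pos_right _ (by omega)
    _ = n.choose (m+1) * (m+1) := (Nat.choose_succ_right_eq n m).symm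
    _ ≤ n.choose (m+1) * n := Nat.mul_le_mul_left _ (by omega)

private lemma s3 (m j : ℕ) : (m+1).choose (j+1) ≤ m.choose j * (m+1) :=
  calc (m+1).choose (j+1) ≤ (m+1).choose (j+1) * (j+1) :=
        Nat.le_mul_of_pos_right _ (Nat.succ_pos j)
    _ = (m+1) * m.choose j := (Nat.add_one_mul_choose_eq m j).symm
    _ = m.choose j * (m+1) := Nat.mul_comm _ _

private lemma s4 (m j : ℕ) (h : j ≤ m + 1) : m.choose (j-1) ≤ (m+1).choose j * (m+1) := by
  cases j with
  | zero => simpa using Nat.le_add_left 1 m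
  | succ i =>
      calc m.choose i ≤ m.choose i * (m+1) := Nat.le_mul_of_pos_right _ (Nat.succ_pos m)
        _ = (m+1).choose (i+1) * (i+1) := by
            rw [Nat.mul_comm, Nat.add_one_mul_choose_eq]
        _ ≤ (m+1).choose (i+1) * (m+1) := Nat.mul_le_mul_left _ (by omega)

private lemma kdown (n a t N : ℕ) (hn : n ≤ N) : n.choose (a+t) ≤ n.choose a * N^t := by
  induction t with
  | zero => simp
  | succ t ih =>
      calc n.choose (a+t+1) ≤ n.choose (a+t) * n := s1 n (a+t)
        _ ≤ (n.choose a * N^t) * N := Nat.mul_le_mul ih hn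
        _ = n.choose a * N^(t+1) := by ring

private lemma kup (n a t N : ℕ) (h : a + t ≤ n) (hn : n ≤ N) :
    n.choose a ≤ n.choose (a+t) * N^t := by
  induction t with
  | zero => simp
  | succ t ih =>
      calc n.choose a ≤ n.choose (a+t) * N^t := ih (by omega)
        _ ≤ (n.choose (a+t+1) * n) * N^t := Nat.mul_le_mul_right _ (s2 n (a+t) (by omega))
        _ ≤ (n.choose (a+t+1) * N) * N^t := Nat.mul_le_mul_right _ (Nat.mul_le_mul_left _ hn)
        _ = n.choose (a+t+1) * N^(t+1) := by ring

private lemma diagup (m j e N : ℕ) (hN : m + e ≤ N) :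
    (m+e).choose (j+e) ≤ m.choose j * N^e := by
  induction e with
  | zero => simp
  | succ e ih =>
      calc (m+(e+1)).choose (j+(e+1)) = ((m+e)+1).choose ((j+e)+1) := by ring_nf
        _ ≤ (m+e).choose (j+e) * (m+e+1) := s3 (m+e) (j+e)
        _ ≤ (m.choose j * N^e) * N := Nat.mul_le_mul (ih (by omega)) (by omega)
        _ = m.choose j * N^(e+1) := by ring

private lemma diagdown (m j e N : ℕ) (hj : j ≤ m + e) (hN : m + e ≤ N) :
    m.choose (j - e) ≤ (m+e).choose j * N^e := by
  induction e generalizing m with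
  | zero => simp
  | succ e ih =>
      have h1 : j - (e+1) = (j - e) - 1 := by omega
      have h2 : j - e ≤ m + 1 := by omega
      calc m.choose (j-(e+1)) = m.choose ((j-e)-1) := by rw [h1]
        _ ≤ (m+1).choose (j-e) * (m+1) := s4 m (j-e) h2
        _ ≤ (((m+1)+e).choose j * N^e) * N :=
            Nat.mul_le_mul (ih (m+1) (by omega) (by omega)) (by omega)
        _ = (m+(e+1)).choose j * N^(e+1) := by ring_nf

private lemma key (n n' k k' d : ℕ) (h1 : n' ≤ n + d) (h1' : n ≤ n' + d)
    (h2 : k' ≤ k + d) (h2' : k ≤ k' + d) (h3 : k ≤ n) (h4 : k' ≤ n')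
    (h5 : 1 ≤ n + n') : n.choose k ≤ n'.choose k' * (n+n')^(3*d) := by
  set N := n + n' with hN
  have hpad : ∀ s : ℕ, s ≤ 3*d → n'.choose k' * N^s ≤ n'.choose k' * N^(3*d) := by
    intro s hs
    exact Nat.mul_le_mul_left _ (Nat.pow_le_pow_right h5 hs)
  rcases le_or_gt n' n with hc | hc
  · -- n' ≤ n, e = n - n'
    set e := n - n' with he
    have step1 : n.choose (k'+e) ≤ n'.choose k' * N^e := by
      have := diagup n' k' e N (by omega)
      have hne : n' + e = n := by omega
      rwa [hne] at this
    rcases le_or_gt (k'+e) k with hk | hk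
    · set t := k - (k'+e) with ht
      have hkt : (k'+e) + t = k := by omega
      calc n.choose k = n.choose ((k'+e)+t) := by rw [hkt]
        _ ≤ n.choose (k'+e) * N^t := kdown n (k'+e) t N (by omega)
        _ ≤ (n'.choose k' * N^e) * N^t := Nat.mul_le_mul_right _ step1
        _ = n'.choose k' * N^(e+t) := by ring
        _ ≤ n'.choose k' * N^(3*d) := hpad _ (by omega)
    · set t := (k'+e) - k with ht
      have hkt : k + t = k' + e := by omega
      calc n.choose k ≤ n.choose (k+t) * N^t := kup n k t N (by omega) (by omega)
        _ = n.choose (k'+e) * N^t := by rw [hkt]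
        _ ≤ (n'.choose k' * N^e) * N^t := Nat.mul_le_mul_right _ step1
        _ = n'.choose k' * N^(e+t) := by ring
        _ ≤ n'.choose k' * N^(3*d) := hpad _ (by omega)
  · -- n < n', e = n' - n
    set e := n' - n with he
    set a := k' - e with ha
    have step1 : n.choose a ≤ n'.choose k' * N^e := by
      have := diagdown n k' e N (by omega) (by omega)
      have hne : n + e = n' := by omega
      rwa [hne] at this
    rcases le_or_gt a k with hk | hk
    · set t := k - a with ht
      have hkt : a + t = k := by omega
      calc n.choose k = n.choose (a+t) := by rw [hkt]
        _ ≤ n.choose a * N^t := kdown n a t N (by omega)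
        _ ≤ (n'.choose k' * N^e) * N^t := Nat.mul_le_mul_right _ step1
        _ = n'.choose k' * N^(e+t) := by ring
        _ ≤ n'.choose k' * N^(3*d) := hpad _ (by omega)
    · set t := a - k with ht
      have hkt : k + t = a := by omega
      calc n.choose k ≤ n.choose (k+t) * N^t := kup n k t N (by omega) (by omega)
        _ = n.choose a * N^t := by rw [hkt]
        _ ≤ (n'.choose k' * N^e) * N^t := Nat.mul_le_mul_right _ step1
        _ = n'.choose k' * N^(e+t) := by ring
        _ ≤ n'.choose k' * N^(3*d) := hpad _ (by omega)

/-- Let `n, n′, k, k′, d` be naturals with `|n − n′| ≤ d`, `|k − k′| ≤ d`, `k ≤ n`,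
`k′ ≤ n′` and `n + n′ ≥ 1`. Then `C(n,k) ≤ C(n′,k′)·(n+n′)^(3d)` and
`C(n′,k′) ≤ C(n,k)·(n+n′)^(3d)` (as real numbers), i.e.
`C(n,k)·(n+n′)^(−3d) ≤ C(n′,k′) ≤ C(n,k)·(n+n′)^(3d)`. -/
theorem stmt15 (n n' k k' d : ℕ)
    (h1 : |(n : ℤ) - (n' : ℤ)| ≤ (d : ℤ)) (h2 : |(k : ℤ) - (k' : ℤ)| ≤ (d : ℤ))
    (h3 : k ≤ n) (h4 : k' ≤ n') (h5 : 1 ≤ n + n') :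
    (n.choose k : ℝ) ≤ (n'.choose k' : ℝ) * ((n + n' : ℕ) : ℝ) ^ (3 * d) ∧
    (n'.choose k' : ℝ) ≤ (n.choose k : ℝ) * ((n + n' : ℕ) : ℝ) ^ (3 * d) := by
  rw [abs_le] at h1 h2
  have a1 : n' ≤ n + d := by omega
  have a1' : n ≤ n' + d := by omega
  have a2 : k' ≤ k + d := by omega
  have a2' : k ≤ k' + d := by omega
  constructor
  · exact_mod_cast key n n' k k' d a1 a1' a2 a2' h3 h4 h5
  · have := key n' n k' k d a1' a1 a2' a2 h4 h3 (by omega)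
    rw [Nat.add_comm n' n] at this
    exact_mod_cast this
end

section
/- Let U be a finite set of size n ≥ 2 and let p, q, r ≥ 1 be natural numbers with n ≥ p ≥ r and n − p + r ≥ q ≥ r. Then there exists a family 𝒞 of q-element subsets of U with |𝒞| ≤ ⌈κ(n,p,q,r) · (p+1) · ln(n)⌉ such that for every p-element subset T of U there is some X ∈ 𝒞 with |T ∩ X| = r. -/
/-- `κ(n,p,q,r) = C(n,q) / (C(p,r)·C(n−p, q−r))`. -/
noncomputable def kappa (n p q r : ℕ) : ℝ :=
  (n.choose q : ℝ) / ((p.choose r : ℝ) * ((n - p).choose (q - r) : ℝ))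

/-!
Probabilistic method, done by counting. A fixed `p`-set `T` meets exactly
`c = C(p,r)·C(n-p,q-r) = C(n,q)/κ` of the `q`-sets in `r` points, so among the `C(n,q)^m` tuples of
`m = ⌈κ(p+1)ln n⌉` `q`-sets at most `C(n,q)^m (1 - 1/κ)^m ≤ C(n,q)^m e^{-m/κ} ≤ C(n,q)^m n^{-(p+1)}`
miss `T`. Summing over the `C(n,p) ≤ n^p` choices of `T` leaves fewer bad tuples than tuples.
-/

open Finset

theorem card_filter_powersetCard_card_inter_eq {α : Type*} [DecidableEq α] {T U : Finset α}
    (hTU : T ⊆ U) {q r : ℕ} (hrq : r ≤ q) :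
    #{X ∈ U.powersetCard q | #(T ∩ X) = r} = (#T).choose r * (#U - #T).choose (q - r) := by
  rw [← card_sdiff_of_subset hTU, ← card_powersetCard, ← card_powersetCard, ← card_product]
  symm
  apply card_nbij' (fun AB => AB.1 ∪ AB.2) (fun X => (T ∩ X, X \ T))
  · rintro ⟨A, B⟩ h
    simp only [coe_product, Set.mem_prod, mem_coe, mem_powersetCard, subset_sdiff] at h
    obtain ⟨⟨hAT, hA⟩, ⟨hBU, hBT⟩, hB⟩ := h
    simp only [coe_filter, mem_powersetCard, Set.mem_ofPred_eq]
    refine ⟨⟨union_subset (hAT.trans hTU) hBU, ?_⟩, ?_⟩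
    · rw [card_union_of_disjoint (disjoint_of_subset_left hAT hBT.symm)]; omega
    · rw [inter_union_distrib_left, inter_eq_right.mpr hAT,
        disjoint_iff_inter_eq_empty.mp hBT.symm, union_empty, hA]
  · intro X h
    simp only [coe_filter, mem_powersetCard, Set.mem_ofPred_eq] at h
    obtain ⟨⟨hXU, hX⟩, hTX⟩ := h
    simp only [coe_product, Set.mem_prod, mem_coe, mem_powersetCard]
    refine ⟨⟨inter_subset_left, hTX⟩, sdiff_subset_sdiff hXU le_rfl, ?_⟩
    have := card_sdiff_add_card_inter X T
    rw [inter_comm] at this; omega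
  · rintro ⟨A, B⟩ h
    simp only [coe_product, Set.mem_prod, mem_coe, mem_powersetCard, subset_sdiff] at h
    obtain ⟨⟨hAT, -⟩, ⟨-, hBT⟩, -⟩ := h
    ext1
    · simp only [inter_union_distrib_left, inter_eq_right.mpr hAT,
        disjoint_iff_inter_eq_empty.mp hBT.symm, union_empty]
    · simp only [union_sdiff_distrib, sdiff_eq_empty_iff_subset.mpr hAT,
        sdiff_eq_self_of_disjoint hBT, empty_union]
  · intro X _
    change T ∩ X ∪ X \ T = X
    rw [inter_comm, union_comm, sdiff_union_inter]

theorem exists_hitting_subset_of_card_mul_pow_lt {α β : Type*} [DecidableEq α]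
    (S : Finset α) (𝒯 : Finset β) (hit : β → α → Prop) [∀ T X, Decidable (hit T X)] {c m : ℕ}
    (hc : ∀ T ∈ 𝒯, c ≤ #{X ∈ S | hit T X}) (hm : #𝒯 * (#S - c) ^ m < #S ^ m) :
    ∃ 𝒞 ⊆ S, #𝒞 ≤ m ∧ ∀ T ∈ 𝒯, ∃ X ∈ 𝒞, hit T X := by
  set tuples : Finset (Fin m → α) := Fintype.piFinset fun _ => S
  set bad : Finset (Fin m → α) :=
    𝒯.biUnion fun T => Fintype.piFinset fun _ => {X ∈ S | ¬hit T X}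
  have hbad : #bad < #tuples := by
    calc #bad ≤ ∑ T ∈ 𝒯, #{X ∈ S | ¬hit T X} ^ m :=
          card_biUnion_le.trans_eq (sum_congr rfl fun T _ => Fintype.card_piFinset_const _ _)
      _ ≤ ∑ _T ∈ 𝒯, (#S - c) ^ m := by
          gcongr with T hT
          have hsplit := card_filter_add_card_filter_not (s := S) (fun X => hit T X)
          have := hc T hT
          omega
      _ < #tuples := by rwa [sum_const, smul_eq_mul, Fintype.card_piFinset_const]
  obtain ⟨f, hfS, hfbad⟩ := exists_mem_notMem_of_card_lt_card hbad
  rw [Fintype.mem_piFinset] at hfS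
  refine ⟨univ.image f, ?_, card_image_le.trans_eq (card_fin m), fun T hT => ?_⟩
  · simpa [image_subset_iff] using hfS
  · by_contra! hmiss
    refine hfbad (mem_biUnion.mpr ⟨T, hT, Fintype.mem_piFinset.mpr fun i => ?_⟩)
    exact mem_filter.mpr ⟨hfS i, hmiss (f i) (mem_image_of_mem f (mem_univ i))⟩

theorem mul_sub_pow_lt_pow {N D c m : ℕ} (hcD : c ≤ D) (hD : 0 < D)
    (hN : (N : ℝ) < Real.exp (m * c / D)) : N * (D - c) ^ m < D ^ m := by
  have hD' : (0 : ℝ) < D := by exact_mod_cast hD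
  have hx : (0 : ℝ) ≤ 1 - c / D := by
    rw [sub_nonneg, div_le_one hD']; exact_mod_cast hcD
  suffices (N : ℝ) * (D - c : ℕ) ^ m < D ^ m by exact_mod_cast this
  calc (N : ℝ) * (D - c : ℕ) ^ m = N * (1 - c / D) ^ m * D ^ m := by
        rw [Nat.cast_sub hcD, mul_assoc, ← mul_pow]; field_simp
    _ ≤ N * Real.exp (-(m * c / D)) * D ^ m := by
        gcongr
        calc (1 - c / D : ℝ) ^ m ≤ Real.exp (-(c / D)) ^ m := by
              gcongr; exact Real.one_sub_le_exp_neg _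
          _ = Real.exp (-(m * c / D)) := by rw [← Real.exp_nat_mul]; ring_nf
    _ < 1 * D ^ m := by
        gcongr
        rwa [Real.exp_neg, ← div_eq_mul_inv, div_lt_one (Real.exp_pos _)]
    _ = D ^ m := one_mul _

theorem choose_lt_exp_succ_mul_log {n : ℕ} (hn : 2 ≤ n) (p : ℕ) :
    (n.choose p : ℝ) < Real.exp ((p + 1) * Real.log n) := by
  have hn' : (1 : ℝ) < n := by exact_mod_cast hn
  calc (n.choose p : ℝ) ≤ (n : ℝ) ^ p := by exact_mod_cast Nat.choose_le_pow n p
    _ < (n : ℝ) ^ (p + 1) := pow_lt_pow_right₀ hn' p.lt_succ_self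
    _ = Real.exp (Real.log ((n : ℝ) ^ (p + 1))) := (Real.exp_log (by positivity)).symm
    _ = Real.exp ((p + 1) * Real.log n) := by rw [Real.log_pow]; push_cast; rfl

theorem choose_mul_sub_pow_lt_pow {n p D c m : ℕ} (hn : 2 ≤ n) (hc : 0 < c) (hcD : c ≤ D)
    (hm : (D / c : ℝ) * (p + 1) * Real.log n ≤ m) : n.choose p * (D - c) ^ m < D ^ m := by
  have hc' : (0 : ℝ) < c := by exact_mod_cast hc
  have hD : (0 : ℝ) < D := by exact_mod_cast hc.trans_le hcD
  refine mul_sub_pow_lt_pow hcD (hc.trans_le hcD) ((choose_lt_exp_succ_mul_log hn p).trans_le ?_)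
  gcongr
  calc ((p : ℝ) + 1) * Real.log n = D / c * (p + 1) * Real.log n * c / D := by field_simp
    _ ≤ m * c / D := by gcongr

theorem stmt17_general {V : Type*} [DecidableEq V] (U : Finset V) (n p q r : ℕ)
    (hU : U.card = n) (hn : 2 ≤ n)
    (hpn : p ≤ n) (hrp : r ≤ p) (hrq : r ≤ q) (hqn : q ≤ n - p + r) :
    ∃ 𝒞 : Finset (Finset V),
      (∀ X ∈ 𝒞, X ⊆ U ∧ X.card = q) ∧
      𝒞.card ≤ ⌈kappa n p q r * ((p : ℝ) + 1) * Real.log n⌉₊ ∧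
      ∀ T ⊆ U, T.card = p → ∃ X ∈ 𝒞, (T ∩ X).card = r := by
  set c := p.choose r * (n - p).choose (q - r)
  have hits : ∀ T ∈ U.powersetCard p, #{X ∈ U.powersetCard q | #(T ∩ X) = r} = c := by
    intro T hT
    rw [mem_powersetCard] at hT
    rw [card_filter_powersetCard_card_inter_eq hT.1 hrq, hT.2, hU]
  obtain ⟨T₀, hT₀⟩ : (U.powersetCard p).Nonempty := powersetCard_nonempty.mpr (by omega)
  have hcD : c ≤ n.choose q := by
    rw [← hits T₀ hT₀, ← hU, ← card_powersetCard]
    exact card_filter_le _ _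
  have hc : 0 < c := Nat.mul_pos (Nat.choose_pos hrp) (Nat.choose_pos (by omega))
  have hkappa : kappa n p q r = (n.choose q : ℝ) / c := by simp only [kappa, c, Nat.cast_mul]
  obtain ⟨𝒞, h𝒞U, h𝒞m, h𝒞hit⟩ := exists_hitting_subset_of_card_mul_pow_lt
    (U.powersetCard q) (U.powersetCard p) (fun T X => #(T ∩ X) = r) (fun T hT => (hits T hT).ge)
    (by
      rw [card_powersetCard, card_powersetCard, hU]
      exact choose_mul_sub_pow_lt_pow hn hc hcD (by rw [← hkappa]; exact Nat.le_ceil _))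
  exact ⟨𝒞, fun X hX => mem_powersetCard.mp (h𝒞U hX), h𝒞m,
    fun T hTU hTp => h𝒞hit T (mem_powersetCard.mpr ⟨hTU, hTp⟩)⟩

/-- Let `U` be a finite set of size `n ≥ 2` and `p, q, r ≥ 1` naturals with
`n ≥ p ≥ r` and `n − p + r ≥ q ≥ r`. Then there exists a family `𝒞` of `q`-element
subsets of `U` with `|𝒞| ≤ ⌈κ(n,p,q,r)·(p+1)·ln(n)⌉` such that every `p`-element
subset `T` of `U` satisfies `|T ∩ X| = r` for some `X ∈ 𝒞` (a strong
`(n,p,q,r)`-set-intersection-family). -/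
theorem stmt17 {V : Type*} [DecidableEq V] (U : Finset V) (n p q r : ℕ)
    (hU : U.card = n) (hn : 2 ≤ n) (hp : 1 ≤ p) (hq : 1 ≤ q) (hr : 1 ≤ r)
    (hpn : p ≤ n) (hrp : r ≤ p) (hrq : r ≤ q) (hqn : q ≤ n - p + r) :
    ∃ 𝒞 : Finset (Finset V),
      (∀ X ∈ 𝒞, X ⊆ U ∧ X.card = q) ∧
      𝒞.card ≤ ⌈kappa n p q r * ((p : ℝ) + 1) * Real.log n⌉₊ ∧
      ∀ T ⊆ U, T.card = p → ∃ X ∈ 𝒞, (T ∩ X).card = r :=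
  stmt17_general U n p q r hU hn hpn hrp hrq hqn
end

section
/- Let U be a finite set of size n ≥ 2, let b ≥ 3 be a natural number, and let 𝒳 be a nonempty finite family of functions f : U → {1,…,b} that is pairwise independent, meaning that for all distinct u, v ∈ U and all i, j ∈ {1,…,b}, the number of f ∈ 𝒳 with f(u) = i and f(v) = j equals |𝒳| / b². Then for every subset T ⊆ U with |T| = p, there exists f ∈ 𝒳 such that for every i ∈ {1,…,b}: | |f⁻¹(i)| − n/b | ≤ √n · b and | |f⁻¹(i) ∩ T| − p/b | ≤ √n · b. -/
/-!
Second-moment method. For a set `S ⊆ U` and a colour `i`, the indicators of the events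
`f u = i` (`u ∈ S`) are pairwise independent with probability `1/b`, so their covariances
vanish and the variance of `|f⁻¹(i) ∩ S|` over `𝒳` is `|S| (1/b)(1 - 1/b) ≤ |S|/b`.
Summing over the `b` colours and over `S ∈ {U, T}`, the average over `f ∈ 𝒳` of the total
squared deviation is at most `n + p ≤ 2n ≤ n b²`; some `f` is at most average, and each
of its deviations is then at most `√n · b`.
-/

open Finset

section SecondMoment

variable {α ι : Type*} (𝒳 : Finset α)

theorem sum_indicator_sub_mul_indicator_sub (A B : α → Prop) [DecidablePred A]
    [DecidablePred B] (p q : ℝ) :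
    ∑ x ∈ 𝒳, ((if A x then 1 else 0) - p) * ((if B x then 1 else 0) - q) =
      #{x ∈ 𝒳 | A x ∧ B x} - q * #{x ∈ 𝒳 | A x} - p * #{x ∈ 𝒳 | B x} + p * q * #𝒳 := by
  have hexpand : ∀ x, ((if A x then (1 : ℝ) else 0) - p) * ((if B x then 1 else 0) - q) =
      (if A x ∧ B x then 1 else 0) - q * (if A x then 1 else 0) - p * (if B x then 1 else 0)
        + p * q := by
    intro x
    split_ifs <;> simp_all <;> ring
  simp only [hexpand, sum_add_distrib, sum_sub_distrib, ← mul_sum, sum_const, nsmul_eq_mul,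
    natCast_card_filter]
  ring

theorem sum_sq_card_filter_sub_of_pairwise (S : Finset ι) (P : ι → α → Prop)
    [∀ u, DecidablePred (P u)] (q : ℝ)
    (hmarg : ∀ u ∈ S, (#{x ∈ 𝒳 | P u x} : ℝ) = q * #𝒳)
    (hpair : ∀ u ∈ S, ∀ v ∈ S, u ≠ v → (#{x ∈ 𝒳 | P u x ∧ P v x} : ℝ) = q ^ 2 * #𝒳) :
    ∑ x ∈ 𝒳, ((#{u ∈ S | P u x} : ℝ) - #S * q) ^ 2 = #S * (q * (1 - q)) * #𝒳 := by
  classical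
  set e : ι → α → ℝ := fun u x => (if P u x then 1 else 0) - q
  have hdev : ∀ x, (#{u ∈ S | P u x} : ℝ) - #S * q = ∑ u ∈ S, e u x := by
    intro x
    simp only [e, sum_sub_distrib, natCast_card_filter, sum_const, nsmul_eq_mul]
  have hcov : ∀ u ∈ S, ∀ v ∈ S,
      ∑ x ∈ 𝒳, e u x * e v x = if u = v then q * (1 - q) * #𝒳 else 0 := by
    intro u hu v hv
    rw [sum_indicator_sub_mul_indicator_sub]
    split_ifs with huv
    · subst huv
      simp only [and_self, hmarg u hu]
      ring
    · rw [hpair u hu v hv huv, hmarg u hu, hmarg v hv]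
      ring
  calc ∑ x ∈ 𝒳, ((#{u ∈ S | P u x} : ℝ) - #S * q) ^ 2
      = ∑ u ∈ S, ∑ v ∈ S, ∑ x ∈ 𝒳, e u x * e v x := by
        simp only [hdev, sq, sum_mul_sum]
        rw [sum_comm]
        exact sum_congr rfl fun u _ => sum_comm
    _ = ∑ u ∈ S, q * (1 - q) * #𝒳 :=
        sum_congr rfl fun u hu => by rw [sum_congr rfl (hcov u hu), sum_ite_eq, if_pos hu]
    _ = #S * (q * (1 - q)) * #𝒳 := by
        rw [sum_const, nsmul_eq_mul]
        ring

end SecondMoment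

theorem mul_card_filter_eq_of_pairwise {V : Type*} (𝒳 : Finset (V → ℕ)) {u v : V} {b : ℕ}
    (hb : 0 < b) (i : ℕ) (hrange : ∀ f ∈ 𝒳, f v ∈ Icc 1 b)
    (hpair : ∀ j ∈ Icc 1 b, b ^ 2 * #{f ∈ 𝒳 | f u = i ∧ f v = j} = #𝒳) :
    b * #{f ∈ 𝒳 | f u = i} = #𝒳 := by
  have hfib : #{f ∈ 𝒳 | f u = i} = ∑ j ∈ Icc 1 b, #{f ∈ 𝒳 | f u = i ∧ f v = j} := by
    rw [card_eq_sum_card_fiberwise (f := fun f => f v) (t := Icc 1 b)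
      fun f hf => hrange f (mem_filter.1 hf).1]
    simp only [filter_filter]
  refine Nat.eq_of_mul_eq_mul_left hb ?_
  rw [← mul_assoc, ← sq, hfib, mul_sum, sum_congr rfl hpair, sum_const, Nat.card_Icc,
    smul_eq_mul, Nat.add_sub_cancel]

section PairwiseIndependentColouring

variable {V : Type*} {U : Finset V} {b : ℕ} {𝒳 : Finset (V → ℕ)}

theorem sum_sq_card_filter_sub_le_of_pairwise (hU : 1 < #U) (hb : 0 < b)
    (hrange : ∀ f ∈ 𝒳, ∀ u ∈ U, f u ∈ Icc 1 b)
    (hpi : ∀ u ∈ U, ∀ v ∈ U, u ≠ v → ∀ i ∈ Icc 1 b, ∀ j ∈ Icc 1 b,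
      b ^ 2 * #{f ∈ 𝒳 | f u = i ∧ f v = j} = #𝒳)
    {S : Finset V} (hS : S ⊆ U) {i : ℕ} (hi : i ∈ Icc 1 b) :
    ∑ f ∈ 𝒳, ((#{u ∈ S | f u = i} : ℝ) - #S / b) ^ 2 ≤ #S / b * #𝒳 := by
  have hb0 : (b : ℝ) ≠ 0 := Nat.cast_ne_zero.2 hb.ne'
  have hmarg : ∀ u ∈ S, (#{f ∈ 𝒳 | f u = i} : ℝ) = (b : ℝ)⁻¹ * #𝒳 := by
    intro u hu
    obtain ⟨v, hv, hvu⟩ := exists_mem_ne hU u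
    rw [eq_inv_mul_iff_mul_eq₀ hb0]
    exact_mod_cast mul_card_filter_eq_of_pairwise 𝒳 hb i
      (fun f hf => hrange f hf v hv) (fun j hj => hpi u (hS hu) v hv hvu.symm i hi j hj)
  have hpair : ∀ u ∈ S, ∀ v ∈ S, u ≠ v →
      (#{f ∈ 𝒳 | f u = i ∧ f v = i} : ℝ) = (b : ℝ)⁻¹ ^ 2 * #𝒳 := by
    intro u hu v hv huv
    rw [inv_pow, eq_inv_mul_iff_mul_eq₀ (pow_ne_zero 2 hb0)]
    exact_mod_cast hpi u (hS hu) v (hS hv) huv i hi i hi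
  rw [div_eq_mul_inv, sum_sq_card_filter_sub_of_pairwise 𝒳 S _ _ hmarg hpair]
  gcongr
  exact mul_le_of_le_one_right (by positivity) (sub_le_self _ (by positivity))

theorem exists_sum_sq_card_filter_sub_le (hU : 1 < #U) (hb : 0 < b) (h𝒳 : 𝒳.Nonempty)
    (hrange : ∀ f ∈ 𝒳, ∀ u ∈ U, f u ∈ Icc 1 b)
    (hpi : ∀ u ∈ U, ∀ v ∈ U, u ≠ v → ∀ i ∈ Icc 1 b, ∀ j ∈ Icc 1 b,
      b ^ 2 * #{f ∈ 𝒳 | f u = i ∧ f v = j} = #𝒳)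
    {T : Finset V} (hTU : T ⊆ U) :
    ∃ f ∈ 𝒳, ∑ i ∈ Icc 1 b, (((#{u ∈ U | f u = i} : ℝ) - #U / b) ^ 2
      + ((#{u ∈ T | f u = i} : ℝ) - #T / b) ^ 2) ≤ #U + #T := by
  refine exists_le_of_sum_le h𝒳 ?_
  rw [sum_comm, sum_const, nsmul_eq_mul]
  calc ∑ i ∈ Icc 1 b, ∑ f ∈ 𝒳, (((#{u ∈ U | f u = i} : ℝ) - #U / b) ^ 2
        + ((#{u ∈ T | f u = i} : ℝ) - #T / b) ^ 2)
      ≤ ∑ _i ∈ Icc 1 b, (#U / b * #𝒳 + #T / b * #𝒳 : ℝ) := sum_le_sum fun i hi => by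
        rw [sum_add_distrib]
        exact add_le_add (sum_sq_card_filter_sub_le_of_pairwise hU hb hrange hpi subset_rfl hi)
          (sum_sq_card_filter_sub_le_of_pairwise hU hb hrange hpi hTU hi)
    _ = #𝒳 * (#U + #T) := by
        rw [sum_const, Nat.card_Icc, Nat.add_sub_cancel, nsmul_eq_mul]
        field_simp

end PairwiseIndependentColouring

theorem stmt18_general {V : Type*} (U : Finset V) (n b : ℕ)
    (hU : U.card = n) (hn : 2 ≤ n) (hb : 3 ≤ b)
    (𝒳 : Finset (V → ℕ)) (h𝒳 : 𝒳.Nonempty)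
    (hrange : ∀ f ∈ 𝒳, ∀ u ∈ U, f u ∈ Finset.Icc 1 b)
    (hpi : ∀ u ∈ U, ∀ v ∈ U, u ≠ v → ∀ i ∈ Finset.Icc 1 b, ∀ j ∈ Finset.Icc 1 b,
      b ^ 2 * (𝒳.filter (fun f => f u = i ∧ f v = j)).card = 𝒳.card) :
    ∀ (p : ℕ) (T : Finset V), T ⊆ U → T.card = p →
      ∃ f ∈ 𝒳, ∀ i ∈ Finset.Icc 1 b,
        |((U.filter (fun u => f u = i)).card : ℝ) - (n : ℝ) / (b : ℝ)| ≤
          Real.sqrt n * b ∧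
        |((T.filter (fun u => f u = i)).card : ℝ) - (p : ℝ) / (b : ℝ)| ≤
          Real.sqrt n * b := by
  intro p T hTU hTp
  subst hU hTp
  obtain ⟨f, hf, hsmall⟩ :=
    exists_sum_sq_card_filter_sub_le (by omega) (by omega) h𝒳 hrange hpi hTU
  have hUT : (#U : ℝ) + #T ≤ #U * b ^ 2 := by
    have hTU' : (#T : ℝ) ≤ #U := by exact_mod_cast card_le_card hTU
    have hb' : (3 : ℝ) ≤ b := by exact_mod_cast hb
    calc (#U : ℝ) + #T ≤ #U * 2 := by linarith
      _ ≤ #U * b ^ 2 := by gcongr; nlinarith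
  have habs_le : ∀ x : ℝ, x ^ 2 ≤ #U * b ^ 2 → |x| ≤ √(#U) * b := fun x hx => by
    simpa [Real.sqrt_mul' _ (sq_nonneg _), Real.sqrt_sq (Nat.cast_nonneg b)]
      using Real.abs_le_sqrt hx
  refine ⟨f, hf, fun i hi => ?_⟩
  have hterm := (single_le_sum (fun j _ => by positivity) hi).trans (hsmall.trans hUT)
  exact ⟨habs_le _ ((le_add_of_nonneg_right (sq_nonneg _)).trans hterm),
    habs_le _ ((le_add_of_nonneg_left (sq_nonneg _)).trans hterm)⟩

/-- Let `U` be a finite set of size `n ≥ 2`, `b ≥ 3` a natural, and `𝒳` a nonempty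
finite pairwise-independent family of functions `f : U → {1,…,b}` (i.e. for distinct
`u, v ∈ U` and `i, j ∈ {1,…,b}`, exactly `|𝒳|/b²` members satisfy `f(u) = i` and
`f(v) = j`). Then for every `T ⊆ U` with `|T| = p` there is `f ∈ 𝒳` such that for all
`i ∈ {1,…,b}`: `||f⁻¹(i)| − n/b| ≤ √n·b` and `||f⁻¹(i) ∩ T| − p/b| ≤ √n·b`. -/
theorem stmt18 {V : Type*} [DecidableEq V] (U : Finset V) (n b : ℕ)
    (hU : U.card = n) (hn : 2 ≤ n) (hb : 3 ≤ b)
    (𝒳 : Finset (V → ℕ)) (h𝒳 : 𝒳.Nonempty)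
    (hrange : ∀ f ∈ 𝒳, ∀ u ∈ U, f u ∈ Finset.Icc 1 b)
    (hpi : ∀ u ∈ U, ∀ v ∈ U, u ≠ v → ∀ i ∈ Finset.Icc 1 b, ∀ j ∈ Finset.Icc 1 b,
      b ^ 2 * (𝒳.filter (fun f => f u = i ∧ f v = j)).card = 𝒳.card) :
    ∀ (p : ℕ) (T : Finset V), T ⊆ U → T.card = p →
      ∃ f ∈ 𝒳, ∀ i ∈ Finset.Icc 1 b,
        |((U.filter (fun u => f u = i)).card : ℝ) - (n : ℝ) / (b : ℝ)| ≤
          Real.sqrt n * b ∧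
        |((T.filter (fun u => f u = i)).card : ℝ) - (p : ℝ) / (b : ℝ)| ≤
          Real.sqrt n * b :=
  stmt18_general U n b hU hn hb 𝒳 h𝒳 hrange hpi
end

section
/- For every real ε > 0 there exists a natural number N such that for every n ≥ N, every finite set U of size n, and all natural numbers p, q, r ≥ 1 with n ≥ p ≥ r and n − p + r ≥ q ≥ r, there exists a family 𝒞 of q-element subsets of U with |𝒞| ≤ κ(n,p,q,r) · 2^(εn) such that for every p-element subset T of U there is some X ∈ 𝒞 with |T ∩ X| ≥ r. -/
/-!
Every `p`-set `T ⊆ U` meets at least `D = C(p,r)·C(n-p,q-r)` of the `Q = C(n,q)` many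
`q`-sets `X ⊆ U` in `r` or more points (choose `r` points of `T` and `q - r` outside it).
Of the `Q ^ m` tuples of `m` such sets, at most `(Q - D) ^ m ≤ Q ^ m · exp (-m D / Q)`
avoid a given `T`, so a union bound over the `C(n,p) ≤ 2 ^ n` sets `T` shows that some
`m ≤ (Q / D) · log C(n,p) + 1` sets serve every `T`. Since `Q / D = κ(n,p,q,r) ≥ 1`,
this is at most `κ · (n + 1) ≤ κ · 2 ^ (ε n)` for large `n`.
-/

open Finset Real Filter

theorem Nat.choose_mul_choose_le_choose {p m r q : ℕ} (hrq : r ≤ q) :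
    p.choose r * m.choose (q - r) ≤ (p + m).choose q := by
  rw [Nat.add_choose_eq]
  exact single_le_sum (f := fun ij : ℕ × ℕ => p.choose ij.1 * m.choose ij.2)
    (fun _ _ => Nat.zero_le _) (a := (r, q - r)) (mem_antidiagonal.2 (Nat.add_sub_cancel' hrq))

theorem Finset.choose_mul_choose_le_card_filter_powersetCard {V : Type*} [DecidableEq V]
    {T U : Finset V} (hTU : T ⊆ U) {q r : ℕ} (hrq : r ≤ q) :
    (#T).choose r * (#U - #T).choose (q - r) ≤
      #{X ∈ U.powersetCard q | r ≤ #(T ∩ X)} := by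
  rw [← card_sdiff_of_subset hTU, ← card_powersetCard, ← card_powersetCard, ← card_product]
  refine card_le_card_of_injOn (fun AB => AB.1 ∪ AB.2) ?_ ?_
  · rintro ⟨A, B⟩ hAB
    simp only [coe_product, Set.mem_prod, mem_coe, mem_powersetCard, subset_sdiff] at hAB
    obtain ⟨⟨hAT, hA⟩, ⟨hBU, hBT⟩, hB⟩ := hAB
    have hAB : Disjoint A B := hBT.symm.mono_left hAT
    simp only [coe_filter, mem_powersetCard, Set.mem_ofPred_eq]
    have hcard : #(A ∪ B) = q := by rw [card_union_of_disjoint hAB]; omega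
    refine ⟨⟨union_subset (hAT.trans hTU) hBU, hcard⟩, ?_⟩
    calc r = #A := hA.symm
      _ ≤ #(T ∩ (A ∪ B)) := card_le_card (subset_inter hAT subset_union_left)
  · rintro ⟨A₁, B₁⟩ h₁ ⟨A₂, B₂⟩ h₂ (h : A₁ ∪ B₁ = A₂ ∪ B₂)
    simp only [coe_product, Set.mem_prod, mem_coe, mem_powersetCard, subset_sdiff] at h₁ h₂
    obtain ⟨⟨hA₁, -⟩, ⟨-, hB₁⟩, -⟩ := h₁
    obtain ⟨⟨hA₂, -⟩, ⟨-, hB₂⟩, -⟩ := h₂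
    have inter_eq {A B : Finset V} (hA : A ⊆ T) (hB : Disjoint B T) : T ∩ (A ∪ B) = A := by
      rw [inter_union_distrib_left, inter_eq_right.2 hA, disjoint_iff_inter_eq_empty.1 hB.symm,
        union_empty]
    have sdiff_eq {A B : Finset V} (hA : A ⊆ T) (hB : Disjoint B T) : (A ∪ B) \ T = B := by
      rw [union_sdiff_distrib, sdiff_eq_empty_iff_subset.2 hA, hB.sdiff_eq_left, empty_union]
    rw [Prod.mk.injEq]
    constructor
    · rw [← inter_eq hA₁ hB₁, ← inter_eq hA₂ hB₂, h]
    · rw [← sdiff_eq hA₁ hB₁, ← sdiff_eq hA₂ hB₂, h]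

theorem Finset.exists_cover_of_card_mul_pow_lt {α β : Type*} [DecidableEq α]
    {S : Finset α} {P : Finset β} (R : β → α → Prop) [∀ b a, Decidable (R b a)]
    {D m : ℕ} (hD : ∀ b ∈ P, D ≤ #{a ∈ S | R b a}) (hm : #P * (#S - D) ^ m < #S ^ m) :
    ∃ C ⊆ S, #C ≤ m ∧ ∀ b ∈ P, ∃ a ∈ C, R b a := by
  let missing : β → Finset (Fin m → α) := fun b =>
    Fintype.piFinset fun _ => {a ∈ S | ¬R b a}
  have hmissing : ∀ b ∈ P, #(missing b) ≤ (#S - D) ^ m := fun b hb => by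
    rw [Fintype.card_piFinset_const]
    refine Nat.pow_le_pow_left ?_ m
    have := card_filter_add_card_filter_not (s := S) fun a => R b a
    have := hD b hb
    omega
  obtain ⟨f, hfS, hf⟩ :
      ∃ f ∈ Fintype.piFinset (fun _ : Fin m => S), f ∉ P.biUnion missing := by
    refine exists_mem_notMem_of_card_lt_card ?_
    calc #(P.biUnion missing) ≤ ∑ b ∈ P, #(missing b) := card_biUnion_le
      _ ≤ #P * (#S - D) ^ m := by simpa using sum_le_sum hmissing
      _ < #S ^ m := hm
      _ = _ := (Fintype.card_piFinset_const S m).symm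
  rw [Fintype.mem_piFinset] at hfS
  refine ⟨univ.image f, ?_, card_image_le.trans (by simp), fun b hb => ?_⟩
  · simpa [image_subset_iff] using hfS
  · simp only [mem_biUnion, not_exists, not_and, missing, Fintype.mem_piFinset, mem_filter,
      not_forall, not_not] at hf
    obtain ⟨i, hi⟩ := hf b hb
    exact ⟨f i, mem_image_of_mem f (mem_univ i), hi (hfS i)⟩

theorem mul_sub_pow_lt_pow_of_div_mul_log_lt {P Q D m : ℕ} (hD : 0 < D) (hDQ : D ≤ Q)
    (hm : Q / D * log P < m) : P * (Q - D) ^ m < Q ^ m := by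
  rcases P.eq_zero_or_pos with rfl | hP
  · simpa using pow_pos (hD.trans_le hDQ) m
  have hQ : (0 : ℝ) < Q := by exact_mod_cast hD.trans_le hDQ
  have hD' : (0 : ℝ) < D := by exact_mod_cast hD
  have hbase : ((Q - D : ℕ) : ℝ) ≤ Q * exp (-(D / Q)) := by
    calc ((Q - D : ℕ) : ℝ) = Q * (1 - D / Q) := by rw [Nat.cast_sub hDQ]; field_simp
      _ ≤ Q * exp (-(D / Q)) := by gcongr; exact one_sub_le_exp_neg _
  have hlog : log P < m * (D / Q) :=
    calc log P = Q / D * log P * (D / Q) := by field_simp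
      _ < m * (D / Q) := by gcongr
  have hexp : (P : ℝ) * exp (-(D / Q)) ^ m < 1 := by
    rw [← exp_nat_mul, ← exp_log (Nat.cast_pos.2 hP), ← exp_add, exp_lt_one_iff]
    linarith
  have hreal : (P : ℝ) * ((Q - D : ℕ) : ℝ) ^ m < (Q : ℝ) ^ m :=
    calc (P : ℝ) * ((Q - D : ℕ) : ℝ) ^ m ≤ P * (Q * exp (-(D / Q))) ^ m := by gcongr
      _ = P * exp (-(D / Q)) ^ m * Q ^ m := by ring
      _ < 1 * Q ^ m := by gcongr
      _ = Q ^ m := one_mul _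
  exact_mod_cast hreal

theorem Finset.exists_cover_card_le_div_mul_log_add_one {α β : Type*} [DecidableEq α]
    {S : Finset α} {P : Finset β} (R : β → α → Prop) [∀ b a, Decidable (R b a)] {D : ℕ}
    (hD0 : 0 < D) (hD : ∀ b ∈ P, D ≤ #{a ∈ S | R b a}) :
    ∃ C ⊆ S, (#C : ℝ) ≤ #S / D * log #P + 1 ∧ ∀ b ∈ P, ∃ a ∈ C, R b a := by
  rcases P.eq_empty_or_nonempty with rfl | ⟨b, hb⟩
  · exact ⟨∅, empty_subset _, by simp, by simp⟩
  obtain ⟨C, hCS, hCm, hC⟩ := exists_cover_of_card_mul_pow_lt R hD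
    (m := ⌊(#S / D : ℝ) * log #P⌋₊ + 1)
    (mul_sub_pow_lt_pow_of_div_mul_log_lt hD0 ((hD b hb).trans (card_filter_le _ _))
      (by push_cast; exact Nat.lt_floor_add_one _))
  refine ⟨C, hCS, ?_, hC⟩
  calc (#C : ℝ) ≤ ⌊(#S / D : ℝ) * log #P⌋₊ + 1 := by exact_mod_cast hCm
    _ ≤ #S / D * log #P + 1 := by
      gcongr
      exact Nat.floor_le (mul_nonneg (by positivity) (log_natCast_nonneg _))

theorem eventually_natCast_add_one_le_two_rpow {ε : ℝ} (hε : 0 < ε) :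
    ∀ᶠ n : ℕ in atTop, (n : ℝ) + 1 ≤ 2 ^ (ε * n) := by
  have hr : 1 < (2 : ℝ) ^ ε := one_lt_rpow one_lt_two hε
  filter_upwards [(isLittleO_coe_const_pow_of_one_lt (R := ℝ) hr).bound one_half_pos,
    eventually_ge_atTop 1] with n hn hn1
  rw [rpow_mul zero_le_two, rpow_natCast]
  rw [norm_natCast, norm_pow, norm_of_nonneg (by positivity)] at hn
  have : (1 : ℝ) ≤ n := by exact_mod_cast hn1
  linarith

/-- For every `ε > 0` there is `N` such that for every `n ≥ N`, every finite set `U`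
of size `n`, and all naturals `p, q, r ≥ 1` with `n ≥ p ≥ r` and `n − p + r ≥ q ≥ r`,
there is a family `𝒞` of `q`-element subsets of `U` with
`|𝒞| ≤ κ(n,p,q,r)·2^(εn)` such that every `p`-element subset `T` of `U` satisfies
`|T ∩ X| ≥ r` for some `X ∈ 𝒞` (an `(n,p,q,r)`-set-intersection-family of size
`κ(n,p,q,r)·2^(o(n))`). -/
theorem stmt19 (ε : ℝ) (hε : 0 < ε) :
    ∃ N : ℕ, ∀ n : ℕ, N ≤ n →
      ∀ (V : Type*) [DecidableEq V] (U : Finset V), U.card = n →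
      ∀ p q r : ℕ, 1 ≤ p → 1 ≤ q → 1 ≤ r →
        p ≤ n → r ≤ p → r ≤ q → q ≤ n - p + r →
      ∃ 𝒞 : Finset (Finset V),
        (∀ X ∈ 𝒞, X ⊆ U ∧ X.card = q) ∧
        (𝒞.card : ℝ) ≤ kappa n p q r * (2 : ℝ) ^ (ε * (n : ℝ)) ∧
        ∀ T ⊆ U, T.card = p → ∃ X ∈ 𝒞, r ≤ (T ∩ X).card := by
  obtain ⟨N, hN⟩ := eventually_atTop.1 (eventually_natCast_add_one_le_two_rpow hε)
  refine ⟨N, fun n hn V _ U hU p q r _ _ _ hpn hrp hrq hqn => ?_⟩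
  set D := p.choose r * (n - p).choose (q - r)
  have hD0 : 0 < D := Nat.mul_pos (Nat.choose_pos hrp) (Nat.choose_pos (by omega))
  have hκ : kappa n p q r = #(U.powersetCard q) / D := by
    rw [kappa, card_powersetCard, hU, ← Nat.cast_mul]
  have hκ1 : 1 ≤ kappa n p q r := by
    rw [hκ, one_le_div (by exact_mod_cast hD0), card_powersetCard, hU]
    exact_mod_cast Nat.add_sub_cancel' hpn ▸ Nat.choose_mul_choose_le_choose hrq
  have hlog : log #(U.powersetCard p) ≤ n := by
    rw [card_powersetCard, hU]
    calc log (n.choose p) ≤ log ((2 : ℝ) ^ n) :=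
          log_le_log (by exact_mod_cast Nat.choose_pos hpn)
            (by exact_mod_cast n.choose_le_two_pow p)
      _ = n * log 2 := by rw [log_pow]
      _ ≤ n := mul_le_of_le_one_right n.cast_nonneg (log_two_lt_d9.le.trans (by norm_num))
  obtain ⟨𝒞, h𝒞, h𝒞card, hcover⟩ := exists_cover_card_le_div_mul_log_add_one
    (S := U.powersetCard q) (P := U.powersetCard p) (fun T X => r ≤ #(T ∩ X)) hD0
    fun T hT => by
      obtain ⟨hTU, hTp⟩ := mem_powersetCard.1 hT
      simpa [hTp, hU] using choose_mul_choose_le_card_filter_powersetCard hTU hrq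
  refine ⟨𝒞, fun X hX => mem_powersetCard.1 (h𝒞 hX), ?_,
    fun T hTU hTp => hcover T (mem_powersetCard.2 ⟨hTU, hTp⟩)⟩
  calc (#𝒞 : ℝ) ≤ kappa n p q r * log #(U.powersetCard p) + 1 := hκ ▸ h𝒞card
    _ ≤ kappa n p q r * (n + 1) := by nlinarith
    _ ≤ kappa n p q r * 2 ^ (ε * n) := by gcongr; exact hN n hn
end
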